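/- arXiv:1905.04374 — 5 statements merged into one kernel-verified Lean document; each statement's English description precedes it below -/
import Mathlib

section
/- Let x_1, …, x_θ be real numbers, let C ⊆ {1,…,θ} with |C| ≥ θ − f where θ ≥ 2f + 1 and f ≥ 0, let M ∈ ℝ be arbitrary, and let β = θ − 2f ≥ 1. Let S ⊆ {1,…,θ} be a set of β indices minimizing |x_i − M|, i.e. |x_i − M| ≤ |x_j − M| for every i ∈ S and j ∉ S. Then for every i ∈ S there exists c ∈ C with |x_i − M| ≤ |x_c − M|; in particular max_{i∈S} |x_i − M| ≤ max_{c∈C} |x_c − M|. -/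
/-!
If `i ∈ S` is not itself correct, then `C` cannot fit inside `S` (it has at least as many
elements), so some correct `c` lies outside `S`, and minimality of `S` gives
`|x i - M| ≤ |x c - M|`. The bound on maxima follows pointwise.
-/

open Finset

namespace Finset

variable {ι : Type*} [DecidableEq ι] {S C : Finset ι} {i : ι}

theorem exists_mem_eq_or_notMem_of_card_le (hcard : #S ≤ #C) (hi : i ∈ S) :
    ∃ c ∈ C, c = i ∨ c ∉ S := by
  obtain ⟨c, hcC, hcS⟩ := exists_mem_notMem_of_card_lt_card
    ((card_erase_lt_of_mem hi).trans_le hcard)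
  refine ⟨c, hcC, ?_⟩
  by_contra! h
  exact hcS (mem_erase.2 h)

theorem exists_mem_le_of_card_le_of_forall_le {α : Type*} [Preorder α] (g : ι → α)
    (hcard : #S ≤ #C) (hSmin : ∀ i ∈ S, ∀ j ∉ S, g i ≤ g j) (hi : i ∈ S) :
    ∃ c ∈ C, g i ≤ g c := by
  obtain ⟨c, hcC, rfl | hcS⟩ := exists_mem_eq_or_notMem_of_card_le hcard hi
  · exact ⟨c, hcC, le_rfl⟩
  · exact ⟨c, hcC, hSmin i hi c hcS⟩

end Finset

/-- let `x_1, …, x_θ` be reals, `C` a set of at least `θ - f` correct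
indices with `θ ≥ 2f + 1`, `M ∈ ℝ` arbitrary, and `S` a set of `β = θ - 2f` indices
minimizing `|x i - M|`. Then every `i ∈ S` is no farther from `M` than some correct
value; in particular `max_{i ∈ S} |x i - M| ≤ max_{c ∈ C} |x c - M|`. -/
theorem closest_to_median_dominated_by_correct (θ f : ℕ) (hθ : 2 * f + 1 ≤ θ)
    (x : Fin θ → ℝ) (C : Finset (Fin θ)) (hC : θ - f ≤ C.card) (M : ℝ)
    (S : Finset (Fin θ)) (hScard : S.card = θ - 2 * f)
    (hSmin : ∀ i ∈ S, ∀ j ∉ S, |x i - M| ≤ |x j - M|) :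
    (∀ i ∈ S, ∃ c ∈ C, |x i - M| ≤ |x c - M|) ∧
      S.sup' (Finset.card_pos.mp (by omega)) (fun i => |x i - M|) ≤
        C.sup' (Finset.card_pos.mp (by omega)) (fun c => |x c - M|) := by
  have dominated : ∀ i ∈ S, ∃ c ∈ C, |x i - M| ≤ |x c - M| := fun _ hi =>
    exists_mem_le_of_card_le_of_forall_le (fun j => |x j - M|) (by omega) hSmin hi
  refine ⟨dominated, sup'_le _ _ fun i hi => ?_⟩
  obtain ⟨c, hcC, hle⟩ := dominated i hi
  exact le_sup'_of_le _ hcC hle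
end

section
/- Fix integers n, f, d with 2f + 2 < n and d ≥ 1, and set m = n − f − 2. Let V_1, …, V_{n−f} be independent identically distributed random vectors in ℝ^d with E V_i = g and E‖V_i − g‖² = d σ², and let B_1, …, B_f be arbitrary random vectors in ℝ^d, possibly depending on the V_i's; arrange these n vectors in a list W_1, …, W_n. For each index i let N(i) be a set of n − f − 2 indices j ≠ i minimizing ‖W_i − W_j‖ (ties broken by a fixed rule) and define the score s(i) = Σ_{j∈N(i)} ‖W_i − W_j‖²; let multi-Krum denote the average of the m vectors W_i achieving the m smallest scores. Define η(n,f) = sqrt( 2·( n − f + ( f·(n−f−2) + f²·(n−f−1) ) / (n − 2f − 2) ) ). Then ‖E[multi-Krum] − g‖² ≤ η(n,f)²·d·σ². -/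
open MeasureTheory ProbabilityTheory Finset

/-- The multi-Krum score of index `i`: the sum of squared distances to its chosen
neighborhood `N i` of `n - f - 2` closest other vectors. -/
noncomputable def krumScore {d n : ℕ} (W : Fin n → EuclideanSpace ℝ (Fin d))
    (N : Fin n → Finset (Fin n)) (i : Fin n) : ℝ :=
  ∑ j ∈ N i, ‖W i - W j‖ ^ 2

/-- `N` assigns to each index `i` a set of `n - f - 2` indices `j ≠ i` minimizing
`‖W i - W j‖` (ties broken by a fixed rule). -/
def IsNeighborhood {d n : ℕ} (f : ℕ) (W : Fin n → EuclideanSpace ℝ (Fin d))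
    (N : Fin n → Finset (Fin n)) : Prop :=
  ∀ i, (N i).card = n - f - 2 ∧ i ∉ N i ∧
    ∀ j ∈ N i, ∀ l, l ∉ N i → l ≠ i → ‖W i - W j‖ ≤ ‖W i - W l‖

/-- `T` is a set of `m` indices achieving the `m` smallest scores `s`. -/
def IsSelection {n : ℕ} (s : Fin n → ℝ) (m : ℕ) (T : Finset (Fin n)) : Prop :=
  T.card = m ∧ ∀ i ∈ T, ∀ j ∉ T, s i ≤ s j

/-- The multi-Krum output: the average of the selected `m` vectors. -/
noncomputable def multiKrumAvg {d n : ℕ} (m : ℕ) (W : Fin n → EuclideanSpace ℝ (Fin d))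
    (T : Finset (Fin n)) : EuclideanSpace ℝ (Fin d) :=
  (m : ℝ)⁻¹ • ∑ i ∈ T, W i

/-- The control ratio `η(n,f) = sqrt(2·(n − f + (f·(n−f−2) + f²·(n−f−1))/(n−2f−2)))`. -/
noncomputable def eta (n f : ℕ) : ℝ :=
  Real.sqrt (2 * ((n : ℝ) - f +
    ((f : ℝ) * ((n : ℝ) - f - 2) + (f : ℝ) ^ 2 * ((n : ℝ) - f - 1)) / ((n : ℝ) - 2 * f - 2)))

lemma coeff_ineq (Q F : ℝ) (hQ : 1 ≤ Q) (hF : 0 ≤ F) :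
    (Q + F)⁻¹ * ((1 + 2 * F / (Q + 1)) * (Q + F + 2) +
        2 * F / (3 * (Q + 1)) * (4 * (Q + F + 2) * (Q + F + 1))) ≤
      2 * ((Q + F + 2) + (F * (Q + F) + F ^ 2 * (Q + F + 1)) / Q) := by
  have hQ0 : 0 < Q := by linarith
  have h1 : 0 < Q + 1 := by linarith
  have h2 : 0 < Q + F := by linarith
  rw [inv_mul_le_iff₀ h2]
  have hQ' : Q ≠ 0 := ne_of_gt hQ0
  have h1' : Q + 1 ≠ 0 := ne_of_gt h1
  field_simp
  ring_nf
  nlinarith [sq_nonneg (7*F - 3), mul_nonneg (sub_nonneg.2 hQ) (sq_nonneg (7*F - 3)),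
    mul_nonneg hF (sub_nonneg.2 hQ), sq_nonneg F, mul_nonneg (mul_nonneg hF hF) hF,
    mul_nonneg (mul_nonneg (mul_nonneg hF hF) hF) hF,
    mul_nonneg (sub_nonneg.2 hQ) (sub_nonneg.2 hQ),
    mul_nonneg (mul_nonneg (sub_nonneg.2 hQ) (sub_nonneg.2 hQ)) (sub_nonneg.2 hQ),
    mul_nonneg (mul_nonneg (sub_nonneg.2 hQ) hF) hF,
    mul_nonneg (mul_nonneg (mul_nonneg (sub_nonneg.2 hQ) hF) hF) hF,
    mul_nonneg (mul_nonneg (mul_nonneg (mul_nonneg (sub_nonneg.2 hQ) hF) hF) hF) hF,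
    mul_nonneg (mul_nonneg (mul_nonneg (sub_nonneg.2 hQ) (sub_nonneg.2 hQ)) hF) hF,
    mul_nonneg (mul_nonneg (sub_nonneg.2 hQ) (sub_nonneg.2 hQ)) hF,
    hF, sub_nonneg.2 hQ]

lemma krumScore_nonneg {d n : ℕ} (W : Fin n → EuclideanSpace ℝ (Fin d))
    (N : Fin n → Finset (Fin n)) (i : Fin n) : 0 ≤ krumScore W N i :=
  Finset.sum_nonneg fun _ _ => by positivity

/-- Byzantine selected index: distance to `g` controlled by its own score plus
the deviations of correct vectors. -/
lemma byz_dist_bound {d n f : ℕ} (hnf : 2 * f + 2 < n)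
    (W : Fin n → EuclideanSpace ℝ (Fin d)) (C : Finset (Fin n)) (hC : C.card = n - f)
    (g : EuclideanSpace ℝ (Fin d))
    (N : Fin n → Finset (Fin n)) (hN : IsNeighborhood f W N)
    {k : Fin n} (hk : k ∉ C) :
    ((n : ℝ) - 2 * f - 1) * ‖W k - g‖ ^ 2 ≤
      2 * (krumScore W N k + ∑ c ∈ C, ‖W c - g‖ ^ 2) := by
  obtain ⟨hcard, hnotmem, _⟩ := hN k
  set P : Finset (Fin n) := N k ∩ C with hP
  have hPB : P.card + (N k \ C).card = (N k).card :=
    Finset.card_inter_add_card_sdiff _ _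
  have hsubB : N k \ C ⊆ (Finset.univ \ C).erase k := by
    intro a ha
    rcases Finset.mem_sdiff.1 ha with ⟨haN, haC⟩
    refine Finset.mem_erase.2 ⟨fun h => hnotmem (h ▸ haN), by simp [haC]⟩
  have hcardcompl : (Finset.univ \ C).card = n - (n - f) := by
    rw [Finset.card_sdiff_of_subset (Finset.subset_univ _), hC, Finset.card_univ, Fintype.card_fin]
  have hBle : (N k \ C).card ≤ n - (n - f) - 1 := by
    have := Finset.card_le_card hsubB
    rwa [Finset.card_erase_of_mem, hcardcompl] at this
    exact Finset.mem_sdiff.2 ⟨Finset.mem_univ _, hk⟩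
  have hf : 1 ≤ f := by
    by_contra h
    have hf0 : f = 0 := by omega
    have : C = Finset.univ := Finset.eq_univ_of_card _ (by rw [hC, hf0]; simp [Fintype.card_fin])
    exact hk (this ▸ Finset.mem_univ k)
  have hPcard : n - 2 * f - 1 ≤ P.card := by omega
  -- pointwise bound for c ∈ P
  have hpt : ∀ c ∈ P, ‖W k - g‖ ^ 2 ≤ 2 * ‖W k - W c‖ ^ 2 + 2 * ‖W c - g‖ ^ 2 := by
    intro c _
    have htri : ‖W k - g‖ ≤ ‖W k - W c‖ + ‖W c - g‖ := by
      have := norm_add_le (W k - W c) (W c - g)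
      simpa [sub_add_sub_cancel] using this
    have h4 : ‖W k - g‖ ^ 2 ≤ (‖W k - W c‖ + ‖W c - g‖) ^ 2 :=
      pow_le_pow_left₀ (norm_nonneg _) htri 2
    nlinarith [sq_nonneg (‖W k - W c‖ - ‖W c - g‖)]
  have hsum : (P.card : ℝ) * ‖W k - g‖ ^ 2 ≤
      2 * (∑ c ∈ P, ‖W k - W c‖ ^ 2) + 2 * ∑ c ∈ P, ‖W c - g‖ ^ 2 := by
    calc (P.card : ℝ) * ‖W k - g‖ ^ 2 = ∑ _c ∈ P, ‖W k - g‖ ^ 2 := by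
          rw [Finset.sum_const, nsmul_eq_mul]
      _ ≤ ∑ c ∈ P, (2 * ‖W k - W c‖ ^ 2 + 2 * ‖W c - g‖ ^ 2) := Finset.sum_le_sum hpt
      _ = _ := by rw [Finset.sum_add_distrib, Finset.mul_sum, Finset.mul_sum]
  have h1 : ∑ c ∈ P, ‖W k - W c‖ ^ 2 ≤ krumScore W N k :=
    Finset.sum_le_sum_of_subset_of_nonneg (Finset.inter_subset_left)
      fun c _ _ => by positivity
  have h2 : ∑ c ∈ P, ‖W c - g‖ ^ 2 ≤ ∑ c ∈ C, ‖W c - g‖ ^ 2 :=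
    Finset.sum_le_sum_of_subset_of_nonneg (Finset.inter_subset_right)
      fun c _ _ => by positivity
  have hcast : ((n : ℝ) - 2 * f - 1) ≤ (P.card : ℝ) := by
    have h5 : ((n - 2*f - 1 : ℕ) : ℝ) ≤ (P.card : ℝ) := Nat.cast_le.2 hPcard
    rw [Nat.cast_sub (show 1 ≤ n - 2*f by omega), Nat.cast_sub (show 2*f ≤ n by omega)] at h5
    push_cast at h5
    linarith
  have h6 := mul_le_mul_of_nonneg_right hcast (sq_nonneg ‖W k - g‖)
  linarith

/-- A selected Byzantine score is at most one third of the total correct score. -/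
lemma byz_score_bound {d n f : ℕ} (hnf : 2 * f + 2 < n)
    (W : Fin n → EuclideanSpace ℝ (Fin d)) (C : Finset (Fin n)) (hC : C.card = n - f)
    (N : Fin n → Finset (Fin n))
    (T : Finset (Fin n)) (hT : IsSelection (krumScore W N) (n - f - 2) T)
    {k : Fin n} (hkT : k ∈ T) (hk : k ∉ C) :
    3 * krumScore W N k ≤ ∑ j ∈ C, krumScore W N j := by
  obtain ⟨hTcard, hTmin⟩ := hT
  have hsubCT : C ∩ T ⊆ T.erase k := by
    intro a ha
    rcases Finset.mem_inter.1 ha with ⟨haC, haT⟩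
    exact Finset.mem_erase.2 ⟨fun h => hk (h ▸ haC), haT⟩
  have hCTcard : (C ∩ T).card ≤ n - f - 2 - 1 := by
    have := Finset.card_le_card hsubCT
    rwa [Finset.card_erase_of_mem hkT, hTcard] at this
  have hCdT : (C \ T).card + (C ∩ T).card = C.card := Finset.card_sdiff_add_card_inter _ _
  have h3 : 3 ≤ (C \ T).card := by omega
  have hterm : ∀ j ∈ C \ T, krumScore W N k ≤ krumScore W N j := by
    intro j hj
    exact hTmin k hkT j (Finset.mem_sdiff.1 hj).2
  calc 3 * krumScore W N k ≤ ((C \ T).card : ℝ) * krumScore W N k := by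
        have : (3:ℝ) ≤ ((C \ T).card : ℝ) := by exact_mod_cast h3
        nlinarith [krumScore_nonneg W N k]
    _ = ∑ _j ∈ C \ T, krumScore W N k := by rw [Finset.sum_const, nsmul_eq_mul]
    _ ≤ ∑ j ∈ C \ T, krumScore W N j := Finset.sum_le_sum hterm
    _ ≤ ∑ j ∈ C, krumScore W N j :=
        Finset.sum_le_sum_of_subset_of_nonneg (Finset.sdiff_subset)
          fun j _ _ => krumScore_nonneg W N j

/-- For a correct index `j`, the score is at most the sum of squared distances to
all other correct indices. -/
lemma score_le_sum_correct {d n f : ℕ} (hnf : 2 * f + 2 < n)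
    (W : Fin n → EuclideanSpace ℝ (Fin d)) (C : Finset (Fin n)) (hC : C.card = n - f)
    (N : Fin n → Finset (Fin n)) (hN : IsNeighborhood f W N)
    {j : Fin n} (hj : j ∈ C) :
    krumScore W N j ≤ ∑ c ∈ C \ {j}, ‖W j - W c‖ ^ 2 := by
  obtain ⟨hcard, hnotmem, hmin⟩ := hN j
  set P : Finset (Fin n) := N j ∩ C with hP
  set B : Finset (Fin n) := N j \ C with hB
  set S : Finset (Fin n) := C \ insert j (N j) with hS
  -- cardinalities
  have hPB : P.card + B.card = (N j).card := by
    exact Finset.card_inter_add_card_sdiff _ _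
  have hCS : S.card + (C ∩ insert j (N j)).card = C.card :=
    Finset.card_sdiff_add_card_inter _ _
  have hCint : C ∩ insert j (N j) = insert j (C ∩ N j) := by
    rw [Finset.inter_insert_of_mem hj]
  have hjP : j ∉ C ∩ N j := fun h => hnotmem (Finset.mem_inter.1 h).2
  have hCintcard : (C ∩ insert j (N j)).card = (C ∩ N j).card + 1 := by
    rw [hCint, Finset.card_insert_of_notMem hjP]
  have hPC : (C ∩ N j).card = P.card := by rw [hP, Finset.inter_comm]
  have hScard : S.card = B.card + 1 := by omega
  -- bound byz part
  have hSsum_nonneg : (0:ℝ) ≤ ∑ c ∈ S, ‖W j - W c‖ ^ 2 :=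
    Finset.sum_nonneg fun c _ => by positivity
  have hBterm : ∀ l ∈ B, ((B.card : ℝ) + 1) * ‖W j - W l‖ ^ 2 ≤
      ∑ c ∈ S, ‖W j - W c‖ ^ 2 := by
    intro l hl
    have hlN : l ∈ N j := (Finset.mem_sdiff.1 hl).1
    have h1 : ∀ c ∈ S, ‖W j - W l‖ ^ 2 ≤ ‖W j - W c‖ ^ 2 := by
      intro c hc
      have hcS := Finset.mem_sdiff.1 hc
      have hcN : c ∉ N j := fun h => hcS.2 (Finset.mem_insert_of_mem h)
      have hcj : c ≠ j := fun h => hcS.2 (by simp [h])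
      exact pow_le_pow_left₀ (norm_nonneg _) (hmin l hlN c hcN hcj) 2
    calc ((B.card : ℝ) + 1) * ‖W j - W l‖ ^ 2
        = (S.card : ℝ) * ‖W j - W l‖ ^ 2 := by rw [hScard]; push_cast; ring
      _ = ∑ _c ∈ S, ‖W j - W l‖ ^ 2 := by rw [Finset.sum_const, nsmul_eq_mul]
      _ ≤ ∑ c ∈ S, ‖W j - W c‖ ^ 2 := Finset.sum_le_sum h1
  have hBsum : ∑ l ∈ B, ‖W j - W l‖ ^ 2 ≤ ∑ c ∈ S, ‖W j - W c‖ ^ 2 := by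
    have h2 : ((B.card : ℝ) + 1) * ∑ l ∈ B, ‖W j - W l‖ ^ 2 ≤
        (B.card : ℝ) * ∑ c ∈ S, ‖W j - W c‖ ^ 2 := by
      calc ((B.card : ℝ) + 1) * ∑ l ∈ B, ‖W j - W l‖ ^ 2
          = ∑ l ∈ B, ((B.card : ℝ) + 1) * ‖W j - W l‖ ^ 2 := by
            rw [Finset.mul_sum]
        _ ≤ ∑ _l ∈ B, ∑ c ∈ S, ‖W j - W c‖ ^ 2 := Finset.sum_le_sum hBterm
        _ = (B.card : ℝ) * ∑ c ∈ S, ‖W j - W c‖ ^ 2 := by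
            rw [Finset.sum_const, nsmul_eq_mul]
    have hpos : (0:ℝ) < (B.card : ℝ) + 1 := by positivity
    have h3 : (B.card : ℝ) * ∑ c ∈ S, ‖W j - W c‖ ^ 2 ≤
        ((B.card : ℝ) + 1) * ∑ c ∈ S, ‖W j - W c‖ ^ 2 := by nlinarith
    nlinarith
  -- assemble
  have hsplit : krumScore W N j = ∑ l ∈ P, ‖W j - W l‖ ^ 2 + ∑ l ∈ B, ‖W j - W l‖ ^ 2 := by
    rw [krumScore, hP, hB, Finset.sum_inter_add_sum_sdiff]
  have hdisj : Disjoint P S := by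
    rw [hP, hS]
    exact Finset.disjoint_left.2 fun a ha hb =>
      (Finset.mem_sdiff.1 hb).2 (Finset.mem_insert_of_mem (Finset.mem_inter.1 ha).1)
  have hsub : P ∪ S ⊆ C \ {j} := by
    intro a ha
    rcases Finset.mem_union.1 ha with h | h
    · rcases Finset.mem_inter.1 h with ⟨haN, haC⟩
      exact Finset.mem_sdiff.2 ⟨haC, by simp; rintro rfl; exact hnotmem haN⟩
    · rcases Finset.mem_sdiff.1 h with ⟨haC, haI⟩
      exact Finset.mem_sdiff.2 ⟨haC, by simp; rintro rfl; exact haI (Finset.mem_insert_self _ _)⟩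
  calc krumScore W N j ≤ ∑ l ∈ P, ‖W j - W l‖ ^ 2 + ∑ c ∈ S, ‖W j - W c‖ ^ 2 := by
        rw [hsplit]; linarith
    _ = ∑ c ∈ P ∪ S, ‖W j - W c‖ ^ 2 := (Finset.sum_union hdisj).symm
    _ ≤ ∑ c ∈ C \ {j}, ‖W j - W c‖ ^ 2 :=
        Finset.sum_le_sum_of_subset_of_nonneg hsub fun c _ _ => by positivity

/-- Pointwise (deterministic) multi-Krum bound. -/
lemma multiKrum_pointwise {d n f : ℕ} (hnf : 2 * f + 2 < n)
    (W : Fin n → EuclideanSpace ℝ (Fin d)) (C : Finset (Fin n)) (hC : C.card = n - f)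
    (g : EuclideanSpace ℝ (Fin d))
    (N : Fin n → Finset (Fin n)) (hN : IsNeighborhood f W N)
    (T : Finset (Fin n)) (hT : IsSelection (krumScore W N) (n - f - 2) T) :
    ‖multiKrumAvg (n - f - 2) W T - g‖ ^ 2 ≤
      ((n : ℝ) - f - 2)⁻¹ *
        ((1 + 2 * f / ((n : ℝ) - 2 * f - 1)) * ∑ c ∈ C, ‖W c - g‖ ^ 2 +
          2 * f / (3 * ((n : ℝ) - 2 * f - 1)) *
            ∑ j ∈ C, ∑ c ∈ C \ {j}, ‖W j - W c‖ ^ 2) := by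
  obtain ⟨hTcard, hTmin⟩ := hT
  have hfn : f + 2 < n := by omega
  have hmR : ((n - f - 2 : ℕ) : ℝ) = (n : ℝ) - f - 2 := by
    rw [Nat.cast_sub (show 2 ≤ n - f by omega), Nat.cast_sub (show f ≤ n by omega)]
    push_cast; ring
  have hmpos : (0 : ℝ) < ((n - f - 2 : ℕ) : ℝ) := by
    rw [hmR]; have : (f : ℝ) + 2 < n := by exact_mod_cast hfn
    linarith
  set q1 : ℝ := (n : ℝ) - 2 * f - 1 with hq1
  have hq1pos : (0 : ℝ) < q1 := by
    have : (2 * f + 2 : ℝ) < n := by exact_mod_cast hnf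
    rw [hq1]; push_cast; linarith
  set SX : ℝ := ∑ c ∈ C, ‖W c - g‖ ^ 2 with hSX
  set SY : ℝ := ∑ j ∈ C, ∑ c ∈ C \ {j}, ‖W j - W c‖ ^ 2 with hSY
  have hX0 : 0 ≤ SX := Finset.sum_nonneg fun c _ => by positivity
  have hY0 : 0 ≤ SY := Finset.sum_nonneg fun j _ => Finset.sum_nonneg fun c _ => by positivity
  -- scores of correct bounded by SY
  have hscoresY : ∑ j ∈ C, krumScore W N j ≤ SY :=
    Finset.sum_le_sum fun j hj => score_le_sum_correct hnf W C hC N hN hj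
  -- step 1: reduce to average of squared norms
  have key : ‖multiKrumAvg (n - f - 2) W T - g‖ ^ 2 ≤
      ((n - f - 2 : ℕ) : ℝ)⁻¹ * ∑ i ∈ T, ‖W i - g‖ ^ 2 := by
    have hrw : multiKrumAvg (n - f - 2) W T - g =
        ((n - f - 2 : ℕ) : ℝ)⁻¹ • ∑ i ∈ T, (W i - g) := by
      rw [multiKrumAvg, Finset.sum_sub_distrib, Finset.sum_const, hTcard, smul_sub]
      congr 1
      rw [← Nat.cast_smul_eq_nsmul ℝ, smul_smul, inv_mul_cancel₀ (ne_of_gt hmpos), one_smul]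
    rw [hrw, norm_smul, Real.norm_eq_abs, abs_of_nonneg (inv_nonneg.2 hmpos.le), mul_pow]
    have ha : ‖∑ i ∈ T, (W i - g)‖ ≤ ∑ i ∈ T, ‖W i - g‖ := norm_sum_le _ _
    have hb : (∑ i ∈ T, ‖W i - g‖) ^ 2 ≤ (T.card : ℝ) * ∑ i ∈ T, ‖W i - g‖ ^ 2 :=
      sq_sum_le_card_mul_sum_sq
    have hc : ‖∑ i ∈ T, (W i - g)‖ ^ 2 ≤ (∑ i ∈ T, ‖W i - g‖) ^ 2 :=
      pow_le_pow_left₀ (norm_nonneg _) ha 2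
    have hTc : (T.card : ℝ) = ((n - f - 2 : ℕ) : ℝ) := by rw [hTcard]
    calc (((n - f - 2:ℕ):ℝ)⁻¹) ^ 2 * ‖∑ i ∈ T, (W i - g)‖ ^ 2
        ≤ (((n - f - 2:ℕ):ℝ)⁻¹) ^ 2 * (((n - f - 2:ℕ):ℝ) * ∑ i ∈ T, ‖W i - g‖ ^ 2) := by
          apply mul_le_mul_of_nonneg_left _ (by positivity)
          rw [← hTc]; exact hc.trans hb
      _ = ((n - f - 2:ℕ):ℝ)⁻¹ * ∑ i ∈ T, ‖W i - g‖ ^ 2 := by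
          field_simp
  -- step 2: split the sum
  have hsplit : ∑ i ∈ T ∩ C, ‖W i - g‖ ^ 2 + ∑ i ∈ T \ C, ‖W i - g‖ ^ 2
      = ∑ i ∈ T, ‖W i - g‖ ^ 2 := Finset.sum_inter_add_sum_sdiff _ _ _
  have h1 : ∑ i ∈ T ∩ C, ‖W i - g‖ ^ 2 ≤ SX :=
    Finset.sum_le_sum_of_subset_of_nonneg Finset.inter_subset_right fun c _ _ => by positivity
  -- byz terms
  set Z : ℝ := 2 / q1 * (SY / 3 + SX) with hZ
  have hZ0 : 0 ≤ Z := by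
    apply mul_nonneg (by positivity) (by linarith)
  have hbyz : ∀ k ∈ T \ C, ‖W k - g‖ ^ 2 ≤ Z := by
    intro k hk
    obtain ⟨hkT, hkC⟩ := Finset.mem_sdiff.1 hk
    have hd := byz_dist_bound hnf W C hC g N hN hkC
    have hs := byz_score_bound hnf W C hC N T ⟨hTcard, hTmin⟩ hkT hkC
    have hsY : 3 * krumScore W N k ≤ SY := le_trans hs hscoresY
    have hdq : q1 * ‖W k - g‖ ^ 2 ≤ 2 * (krumScore W N k + SX) := by
      rw [hq1, hSX]; exact hd
    rw [hZ, div_mul_eq_mul_div, le_div_iff₀ hq1pos]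
    nlinarith [krumScore_nonneg W N k]
  have h2 : ∑ i ∈ T \ C, ‖W i - g‖ ^ 2 ≤ (f : ℝ) * Z := by
    have hcardTC : (T \ C).card ≤ f := by
      have hsub : T \ C ⊆ Finset.univ \ C := fun a ha =>
        Finset.mem_sdiff.2 ⟨Finset.mem_univ _, (Finset.mem_sdiff.1 ha).2⟩
      have := Finset.card_le_card hsub
      rw [Finset.card_sdiff_of_subset (Finset.subset_univ _), hC, Finset.card_univ,
        Fintype.card_fin] at this
      omega
    calc ∑ i ∈ T \ C, ‖W i - g‖ ^ 2 ≤ ∑ _i ∈ T \ C, Z := Finset.sum_le_sum hbyz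
      _ = ((T \ C).card : ℝ) * Z := by rw [Finset.sum_const, nsmul_eq_mul]
      _ ≤ (f : ℝ) * Z := by
          apply mul_le_mul_of_nonneg_right _ hZ0
          exact_mod_cast hcardTC
  -- combine
  have htot : ∑ i ∈ T, ‖W i - g‖ ^ 2 ≤ SX + (f : ℝ) * Z := by
    rw [← hsplit]; linarith
  have heq : SX + (f : ℝ) * Z =
      (1 + 2 * f / q1) * SX + 2 * f / (3 * q1) * SY := by
    rw [hZ]; field_simp; ring
  calc ‖multiKrumAvg (n - f - 2) W T - g‖ ^ 2
      ≤ ((n - f - 2 : ℕ) : ℝ)⁻¹ * ∑ i ∈ T, ‖W i - g‖ ^ 2 := key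
    _ ≤ ((n - f - 2 : ℕ) : ℝ)⁻¹ * (SX + (f : ℝ) * Z) :=
        mul_le_mul_of_nonneg_left htot (by positivity)
    _ = ((n : ℝ) - f - 2)⁻¹ *
        ((1 + 2 * f / q1) * SX + 2 * f / (3 * q1) * SY) := by
        rw [heq, hmR]

/-- key quantitative bound of Lemma 1. With `n - f` i.i.d. correct vectors
(mean `g`, `E‖V - g‖² = d·σ²`), `f` arbitrary (Byzantine) vectors, and multi-Krum with
parameter `m = n - f - 2`, one has `‖E[multi-Krum] - g‖² ≤ η(n,f)²·d·σ²`. -/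
theorem multiKrum_expectation_bound (n f d : ℕ) (hnf : 2 * f + 2 < n) (hd : 1 ≤ d)
    {Ω : Type*} [MeasurableSpace Ω] (μ : Measure Ω) [IsProbabilityMeasure μ]
    (W : Fin n → Ω → EuclideanSpace ℝ (Fin d))
    (C : Finset (Fin n)) (hCcard : C.card = n - f)
    (g : EuclideanSpace ℝ (Fin d)) (σ : ℝ) (hσ : 0 ≤ σ)
    (hmeas : ∀ i, Measurable (W i))
    (hindep : iIndepFun (fun i : {x // x ∈ C} => W i.1) μ)
    (hid : ∀ i ∈ C, ∀ j ∈ C, IdentDistrib (W i) (W j) μ μ)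
    (hint : ∀ i ∈ C, Integrable (W i) μ)
    (hmean : ∀ i ∈ C, ∫ ω, W i ω ∂μ = g)
    (hint2 : ∀ i ∈ C, Integrable (fun ω => ‖W i ω - g‖ ^ 2) μ)
    (hvar : ∀ i ∈ C, ∫ ω, ‖W i ω - g‖ ^ 2 ∂μ = d * σ ^ 2)
    (N : Ω → Fin n → Finset (Fin n))
    (hN : ∀ ω, IsNeighborhood f (fun i => W i ω) (N ω))
    (T : Ω → Finset (Fin n))
    (hT : ∀ ω, IsSelection (krumScore (fun i => W i ω) (N ω)) (n - f - 2) (T ω))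
    (MK : Ω → EuclideanSpace ℝ (Fin d))
    (hMK : ∀ ω, MK ω = multiKrumAvg (n - f - 2) (fun i => W i ω) (T ω))
    (hMKint : Integrable MK μ) :
    ‖(∫ ω, MK ω ∂μ) - g‖ ^ 2 ≤ eta n f ^ 2 * d * σ ^ 2 := by
  have hfn : f + 2 < n := by omega
  have hnR : (2 * (f:ℝ) + 2) < n := by exact_mod_cast hnf
  set c0 : ℝ := ((n : ℝ) - f - 2)⁻¹ with hc0
  set c1 : ℝ := 1 + 2 * f / ((n : ℝ) - 2 * f - 1) with hc1
  set c2 : ℝ := 2 * f / (3 * ((n : ℝ) - 2 * f - 1)) with hc2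
  have hq1pos : (0:ℝ) < (n : ℝ) - 2 * f - 1 := by linarith
  have hc00 : 0 ≤ c0 := by rw [hc0]; apply inv_nonneg.2; linarith
  have hc10 : 0 ≤ c1 := by rw [hc1]; positivity
  have hc20 : 0 ≤ c2 := by rw [hc2]; positivity
  set SX : Ω → ℝ := fun ω => ∑ c ∈ C, ‖W c ω - g‖ ^ 2 with hSX
  set SY : Ω → ℝ := fun ω => ∑ j ∈ C, ∑ c ∈ C \ {j}, ‖W j ω - W c ω‖ ^ 2 with hSY
  set D : Ω → ℝ := fun ω => c0 * (c1 * SX ω + c2 * SY ω) with hD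
  -- pointwise bound
  have hDbd : ∀ ω, ‖MK ω - g‖ ^ 2 ≤ D ω := by
    intro ω
    rw [hMK ω]
    exact multiKrum_pointwise hnf (fun i => W i ω) C hCcard g (N ω) (hN ω) (T ω) (hT ω)
  have hD0 : ∀ ω, 0 ≤ D ω := fun ω => le_trans (by positivity) (hDbd ω)
  -- integrability of pieces
  have hpairint : ∀ j ∈ C, ∀ c ∈ C, Integrable (fun ω => ‖W j ω - W c ω‖ ^ 2) μ := by
    intro j hj c hc
    have hbig : Integrable (fun ω => 2 * ‖W j ω - g‖ ^ 2 + 2 * ‖W c ω - g‖ ^ 2) μ :=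
      ((hint2 j hj).const_mul 2).add ((hint2 c hc).const_mul 2)
    apply hbig.mono'
    · exact ((((hmeas j).sub (hmeas c)).norm.pow_const 2)).aestronglyMeasurable
    · filter_upwards with ω
      rw [Real.norm_eq_abs, abs_of_nonneg (by positivity)]
      have htri : ‖W j ω - W c ω‖ ≤ ‖W j ω - g‖ + ‖W c ω - g‖ := by
        have := norm_sub_le (W j ω - g) (W c ω - g)
        simpa [sub_sub_sub_cancel_right] using this
      have h4 := pow_le_pow_left₀ (norm_nonneg _) htri 2
      nlinarith [sq_nonneg (‖W j ω - g‖ - ‖W c ω - g‖)]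
  have hpairbd : ∀ j ∈ C, ∀ c ∈ C, ∫ ω, ‖W j ω - W c ω‖ ^ 2 ∂μ ≤ 4 * (d * σ ^ 2) := by
    intro j hj c hc
    have hbig : Integrable (fun ω => 2 * ‖W j ω - g‖ ^ 2 + 2 * ‖W c ω - g‖ ^ 2) μ :=
      ((hint2 j hj).const_mul 2).add ((hint2 c hc).const_mul 2)
    have hmono : ∫ ω, ‖W j ω - W c ω‖ ^ 2 ∂μ ≤
        ∫ ω, (2 * ‖W j ω - g‖ ^ 2 + 2 * ‖W c ω - g‖ ^ 2) ∂μ := by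
      apply integral_mono (hpairint j hj c hc) hbig
      intro ω
      dsimp only
      have htri : ‖W j ω - W c ω‖ ≤ ‖W j ω - g‖ + ‖W c ω - g‖ := by
        have := norm_sub_le (W j ω - g) (W c ω - g)
        simpa [sub_sub_sub_cancel_right] using this
      have h4 := pow_le_pow_left₀ (norm_nonneg _) htri 2
      nlinarith [sq_nonneg (‖W j ω - g‖ - ‖W c ω - g‖)]
    rw [integral_add ((hint2 j hj).const_mul 2) ((hint2 c hc).const_mul 2),
      integral_const_mul, integral_const_mul, hvar j hj, hvar c hc] at hmono
    linarith
  have hSXint : Integrable SX μ := integrable_finset_sum _ fun c hc => hint2 c hc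
  have hSYint : Integrable SY μ := integrable_finset_sum _ fun j hj =>
    integrable_finset_sum _ fun c hc => hpairint j hj c (Finset.mem_sdiff.1 hc).1
  have hDint : Integrable D μ :=
    (((hSXint.const_mul c1).add (hSYint.const_mul c2)).const_mul c0)
  -- integrability of ‖MK - g‖^2
  have hMKmeas : AEStronglyMeasurable (fun ω => ‖MK ω - g‖) μ :=
    (hMKint.aestronglyMeasurable.sub aestronglyMeasurable_const).norm
  have hsqint : Integrable (fun ω => ‖MK ω - g‖ ^ 2) μ := by
    apply hDint.mono' (hMKmeas.pow 2)
    filter_upwards with ω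
    simp only [Pi.pow_apply]
    have h0 : (0:ℝ) ≤ ‖MK ω - g‖ ^ 2 := by positivity
    rw [Real.norm_eq_abs, abs_of_nonneg h0]
    exact hDbd ω
  -- Jensen/Cauchy-Schwarz: (E h)^2 ≤ E h^2
  have hL2 : MemLp (fun ω => ‖MK ω - g‖) 2 μ :=
    (memLp_two_iff_integrable_sq hMKmeas).2 hsqint
  have hjensen : (∫ ω, ‖MK ω - g‖ ∂μ) ^ 2 ≤ ∫ ω, ‖MK ω - g‖ ^ 2 ∂μ := by
    have h0 := variance_nonneg (fun ω => ‖MK ω - g‖) μ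
    rw [variance_eq_sub hL2] at h0
    have : (fun ω => ‖MK ω - g‖) ^ 2 = fun ω => ‖MK ω - g‖ ^ 2 := by
      funext ω; simp [Pi.pow_apply]
    rw [this] at h0
    linarith
  -- first step
  have hstep1 : ‖(∫ ω, MK ω ∂μ) - g‖ ≤ ∫ ω, ‖MK ω - g‖ ∂μ := by
    have : (∫ ω, MK ω ∂μ) - g = ∫ ω, (MK ω - g) ∂μ := by
      rw [integral_sub hMKint (integrable_const g), integral_const, probReal_univ,
        one_smul]
    rw [this]
    exact norm_integral_le_integral_norm _
  have hstep2 : ‖(∫ ω, MK ω ∂μ) - g‖ ^ 2 ≤ ∫ ω, ‖MK ω - g‖ ^ 2 ∂μ :=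
    le_trans (pow_le_pow_left₀ (norm_nonneg _) hstep1 2) hjensen
  have hstep3 : ∫ ω, ‖MK ω - g‖ ^ 2 ∂μ ≤ ∫ ω, D ω ∂μ :=
    integral_mono hsqint hDint hDbd
  -- compute/bound ∫ D
  have hA : ((C.card : ℕ) : ℝ) = (n : ℝ) - f := by
    rw [hCcard, Nat.cast_sub (show f ≤ n by omega)]
  have hIX : ∫ ω, SX ω ∂μ = ((n : ℝ) - f) * (d * σ ^ 2) := by
    rw [hSX, integral_finset_sum _ fun c hc => hint2 c hc]
    rw [Finset.sum_congr rfl fun c hc => hvar c hc, Finset.sum_const, nsmul_eq_mul, hA]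
  have hIY : ∫ ω, SY ω ∂μ ≤ ((n : ℝ) - f) * (((n : ℝ) - f - 1) * (4 * (d * σ ^ 2))) := by
    rw [hSY, integral_finset_sum _ fun j hj =>
      integrable_finset_sum _ fun c hc => hpairint j hj c (Finset.mem_sdiff.1 hc).1]
    have hcard' : ∀ j ∈ C, ((C \ {j}).card : ℝ) = (n : ℝ) - f - 1 := by
      intro j hj
      rw [Finset.sdiff_singleton_eq_erase, Finset.card_erase_of_mem hj, hCcard]
      rw [Nat.cast_sub (show 1 ≤ n - f by omega), Nat.cast_sub (show f ≤ n by omega)]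
      push_cast; ring
    calc ∑ j ∈ C, ∫ ω, ∑ c ∈ C \ {j}, ‖W j ω - W c ω‖ ^ 2 ∂μ
        ≤ ∑ j ∈ C, (((n : ℝ) - f - 1) * (4 * (d * σ ^ 2))) := by
          apply Finset.sum_le_sum
          intro j hj
          rw [integral_finset_sum _ fun c hc => hpairint j hj c (Finset.mem_sdiff.1 hc).1]
          calc ∑ c ∈ C \ {j}, ∫ ω, ‖W j ω - W c ω‖ ^ 2 ∂μ
              ≤ ∑ c ∈ C \ {j}, 4 * (d * σ ^ 2) := Finset.sum_le_sum fun c hc =>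
                hpairbd j hj c (Finset.mem_sdiff.1 hc).1
            _ = ((C \ {j}).card : ℝ) * (4 * (d * σ ^ 2)) := by
                rw [Finset.sum_const, nsmul_eq_mul]
            _ = ((n : ℝ) - f - 1) * (4 * (d * σ ^ 2)) := by rw [hcard' j hj]
      _ = ((n : ℝ) - f) * (((n : ℝ) - f - 1) * (4 * (d * σ ^ 2))) := by
          rw [Finset.sum_const, nsmul_eq_mul, hA]
  have hID : ∫ ω, D ω ∂μ ≤
      c0 * (c1 * (((n : ℝ) - f) * (d * σ ^ 2)) +
        c2 * (((n : ℝ) - f) * (((n : ℝ) - f - 1) * (4 * (d * σ ^ 2))))) := by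
    rw [hD]
    rw [integral_const_mul, integral_add (hSXint.const_mul c1) (hSYint.const_mul c2),
      integral_const_mul, integral_const_mul]
    apply mul_le_mul_of_nonneg_left _ hc00
    have := mul_le_mul_of_nonneg_left hIY hc20
    rw [hIX]
    linarith
  -- numeric conclusion
  have hetasq : eta n f ^ 2 = 2 * ((n : ℝ) - f +
      ((f : ℝ) * ((n : ℝ) - f - 2) + (f : ℝ) ^ 2 * ((n : ℝ) - f - 1)) /
        ((n : ℝ) - 2 * f - 2)) := by
    rw [eta, Real.sq_sqrt]
    have hq : (0:ℝ) < (n : ℝ) - 2 * f - 2 := by linarith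
    have h1 : (0:ℝ) ≤ (n : ℝ) - f - 2 := by linarith
    have h2 : (0:ℝ) ≤ (n : ℝ) - f - 1 := by linarith
    have h3 : (0:ℝ) ≤ (f : ℝ) := Nat.cast_nonneg f
    have h4 : 0 ≤ (f : ℝ) * ((n : ℝ) - f - 2) + (f : ℝ) ^ 2 * ((n : ℝ) - f - 1) :=
      add_nonneg (mul_nonneg h3 h1) (mul_nonneg (sq_nonneg _) h2)
    have h5 := div_nonneg h4 hq.le
    linarith
  have hnum : c0 * (c1 * (((n : ℝ) - f) * (d * σ ^ 2)) +
      c2 * (((n : ℝ) - f) * (((n : ℝ) - f - 1) * (4 * (d * σ ^ 2))))) ≤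
      eta n f ^ 2 * d * σ ^ 2 := by
    set Q : ℝ := (n : ℝ) - 2 * f - 2 with hQdef
    have hQ1 : (1:ℝ) ≤ Q := by
      rw [hQdef]; push_cast
      have : (2 * f + 2 : ℕ) + 1 ≤ n := hnf
      have : ((2 * f + 2 + 1 : ℕ) : ℝ) ≤ n := by exact_mod_cast this
      push_cast at this; linarith
    have hF0 : (0:ℝ) ≤ (f:ℝ) := Nat.cast_nonneg f
    have hci := coeff_ineq Q f hQ1 hF0
    have hds : (0:ℝ) ≤ (d : ℝ) * σ ^ 2 := by positivity
    have e1 : (n : ℝ) - f - 2 = Q + f := by rw [hQdef]; ring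
    have e2 : (n : ℝ) - 2 * f - 1 = Q + 1 := by rw [hQdef]; ring
    have e3 : (n : ℝ) - f = Q + f + 2 := by rw [hQdef]; ring
    have e4 : (n : ℝ) - f - 1 = Q + f + 1 := by rw [hQdef]; ring
    rw [hetasq, hc0, hc1, hc2, e1, e4, e2, e3]
    calc (Q + (f:ℝ))⁻¹ * ((1 + 2 * f / (Q + 1)) * ((Q + f + 2) * (d * σ ^ 2)) +
          2 * f / (3 * (Q + 1)) * ((Q + f + 2) * ((Q + f + 1) * (4 * (d * σ ^ 2)))))
        = ((Q + (f:ℝ))⁻¹ * ((1 + 2 * f / (Q + 1)) * (Q + f + 2) +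
            2 * f / (3 * (Q + 1)) * (4 * (Q + f + 2) * (Q + f + 1)))) * (d * σ ^ 2) := by
          ring
      _ ≤ (2 * ((Q + (f:ℝ) + 2) + ((f:ℝ) * (Q + f) + (f:ℝ) ^ 2 * (Q + f + 1)) / Q)) *
            (d * σ ^ 2) := mul_le_mul_of_nonneg_right hci hds
      _ = 2 * (Q + (f:ℝ) + 2 + ((f:ℝ) * (Q + f) + (f:ℝ) ^ 2 * (Q + f + 1)) / Q) *
            d * σ ^ 2 := by ring
  calc ‖(∫ ω, MK ω ∂μ) - g‖ ^ 2 ≤ ∫ ω, ‖MK ω - g‖ ^ 2 ∂μ := hstep2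
    _ ≤ ∫ ω, D ω ∂μ := hstep3
    _ ≤ _ := hID
    _ ≤ eta n f ^ 2 * d * σ ^ 2 := hnum
end

section
/- Fix integers n, f, d with 2f + 2 < n and d ≥ 1, and set m = n − f − 2. Let V_1, …, V_{n−f} be independent identically distributed random vectors in ℝ^d with E V_i = g and E‖V_i − g‖² = d σ², and let B_1, …, B_f be arbitrary random vectors in ℝ^d, possibly depending on the V_i's. Define η(n,f) = sqrt( 2·( n − f + ( f·(n−f−2) + f²·(n−f−1) ) / (n − 2f − 2) ) ) and assume η(n,f)·√d·σ < ‖g‖. Let multi-Krum denote the average of the m input vectors achieving the m smallest multi-Krum scores. Then, with sin α = η(n,f)·√d·σ / ‖g‖ (so 0 ≤ α < π/2), one has ⟨E[multi-Krum], g⟩ ≥ (1 − sin α)·‖g‖² > 0. -/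
open MeasureTheory ProbabilityTheory Finset

open scoped RealInnerProductSpace

lemma krum_alg (F P : ℝ) (hF : F = 0 ∨ 1 ≤ F) (hF0 : 0 ≤ F) (hP : 1 ≤ P) :
    (P + F)⁻¹ * ((1 + 2*F/P) * (P+F+2) + (2*F/((F+2)*P)) * (2*(P+F+2)*(P+F+1)))
      ≤ 2 * ((P+F+2) + (F*(P+F) + F^2*(P+F+1))/P) := by
  have hP0 : 0 < P := by linarith
  have hM : 0 < P + F := by linarith
  have hF2 : 0 < F + 2 := by linarith
  rw [inv_mul_le_iff₀ hM]
  have h1 : (1 + 2*F/P) * (P+F+2) + (2*F/((F+2)*P)) * (2*(P+F+2)*(P+F+1))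
      = ((F+2)*(P + 2*F)*(P+F+2) + 4*F*(P+F+2)*(P+F+1)) / ((F+2)*P) := by
    field_simp; ring
  have h2 : (P+F) * (2 * ((P+F+2) + (F*(P+F) + F^2*(P+F+1))/P))
      = (2*(P+F)*(F+2)*(P*(P+F+2) + F*(P+F) + F^2*(P+F+1))) / ((F+2)*P) := by
    field_simp; ring
  rw [h1, h2, div_le_div_iff_of_pos_right (by positivity)]
  rcases hF with h | h
  · subst h
    nlinarith [mul_nonneg (mul_nonneg (by linarith : (0:ℝ) ≤ 2*P-1) hP0.le) (by linarith : (0:ℝ) ≤ P+2)]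
  · nlinarith [mul_pos hP0 hP0, sq_nonneg (P-1), sq_nonneg F, mul_nonneg hF0 hF0,
      mul_nonneg (mul_nonneg hF0 hF0) hF0, sq_nonneg (F-1), sq_nonneg (P+F),
      mul_nonneg (mul_nonneg (mul_nonneg hF0 hF0) hF0) hF0,
      mul_le_mul_of_nonneg_left h (mul_nonneg (mul_nonneg hF0 hF0) hF0),
      mul_le_mul_of_nonneg_left h (mul_nonneg hF0 hF0),
      mul_nonneg (sub_nonneg.2 hP) hF0, mul_nonneg (mul_nonneg (sub_nonneg.2 hP) hF0) hF0]

lemma sq_dist_tri {E : Type*} [NormedAddCommGroup E] (a b c : E) :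
    ‖a - c‖ ^ 2 ≤ 2 * ‖a - b‖ ^ 2 + 2 * ‖b - c‖ ^ 2 := by
  have h : ‖a - c‖ ≤ ‖a - b‖ + ‖b - c‖ := norm_sub_le_norm_sub_add_norm_sub a b c
  have h2 := mul_self_le_mul_self (norm_nonneg (a - c)) h
  nlinarith [sq_nonneg (‖a - b‖ - ‖b - c‖)]

lemma pointwise_bound {d n : ℕ} (f : ℕ) (hnf : 2 * f + 2 < n)
    (W : Fin n → EuclideanSpace ℝ (Fin d)) (C : Finset (Fin n)) (hC : C.card = n - f)
    (g : EuclideanSpace ℝ (Fin d)) (N : Fin n → Finset (Fin n)) (hN : IsNeighborhood f W N)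
    (T : Finset (Fin n)) (hT : IsSelection (krumScore W N) (n - f - 2) T) :
    ‖multiKrumAvg (n - f - 2) W T - g‖ ^ 2 ≤
      ((n - f - 2 : ℕ) : ℝ)⁻¹ *
        ((1 + 2 * f / ((n - 2*f - 2 : ℕ) : ℝ)) * (∑ i ∈ C, ‖W i - g‖ ^ 2) +
         (2 * f / (((f : ℝ) + 2) * ((n - 2*f - 2 : ℕ) : ℝ))) *
           (∑ i ∈ C, ∑ j ∈ C.erase i, ‖W i - W j‖ ^ 2)) := by
  set m := n - f - 2 with hm
  set p := n - 2*f - 2 with hp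
  set s := krumScore W N with hs
  set X := ∑ i ∈ C, ‖W i - g‖ ^ 2 with hX
  set Y := ∑ i ∈ C, ∑ j ∈ C.erase i, ‖W i - W j‖ ^ 2 with hY
  have hmp : m = p + f := by omega
  have hp1 : 1 ≤ p := by omega
  have hm1 : 1 ≤ m := by omega
  have hnfm : n - f = m + 2 := by omega
  have hfn : f ≤ n := by omega
  have hcompl : (univ \ C).card = f := by
    rw [card_sdiff_of_subset (subset_univ C), card_univ, Fintype.card_fin, hC]; omega
  have hX0 : 0 ≤ X := sum_nonneg fun i _ => by positivity
  have hY0 : 0 ≤ Y := sum_nonneg fun i _ => sum_nonneg fun j _ => by positivity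
  have hs0 : ∀ i, 0 ≤ s i := fun i => sum_nonneg fun j _ => by positivity
  have hp0R : (0:ℝ) < (p:ℝ) := by exact_mod_cast hp1
  have hm0R : (0:ℝ) < (m:ℝ) := by exact_mod_cast hm1
  -- L2 : score of a correct vector is at most its sum of squared distances to other correct
  have hQ : ∀ i ∈ C, s i ≤ ∑ j ∈ C.erase i, ‖W i - W j‖ ^ 2 := by
    intro i hi
    obtain ⟨hcard, hni, hmin⟩ := hN i
    have hsplit : s i = (∑ j ∈ N i ∩ C, ‖W i - W j‖ ^ 2) + ∑ j ∈ N i \ C, ‖W i - W j‖ ^ 2 := by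
      rw [hs, krumScore, ← sum_inter_add_sum_sdiff]
    have hsplit2 : (∑ j ∈ C.erase i, ‖W i - W j‖ ^ 2)
        = (∑ j ∈ C.erase i ∩ N i, ‖W i - W j‖ ^ 2)
          + ∑ j ∈ C.erase i \ N i, ‖W i - W j‖ ^ 2 := (sum_inter_add_sum_sdiff _ _ _).symm
    have hAeq : C.erase i ∩ N i = N i ∩ C := by
      ext j
      simp only [mem_inter, mem_erase]
      constructor
      · rintro ⟨⟨_, hj⟩, hj2⟩; exact ⟨hj2, hj⟩
      · rintro ⟨hj2, hj⟩; exact ⟨⟨fun h => hni (h ▸ hj2), hj⟩, hj2⟩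
    set B := N i \ C with hB
    set D := C.erase i \ N i with hD
    have hci : C.card = m + 2 := by rw [hC]; omega
    have hce : (C.erase i).card = m + 1 := by rw [card_erase_of_mem hi, hci]; omega
    have hc1 : (N i ∩ C).card + B.card = m := by
      rw [hB, card_inter_add_card_sdiff, hcard]
    have hc2 : D.card + (C.erase i ∩ N i).card = m + 1 := by
      rw [hD, card_sdiff_add_card_inter, hce]
    have hDB : D.card = B.card + 1 := by
      have := congrArg Finset.card hAeq
      omega
    have hBD : (∑ j ∈ B, ‖W i - W j‖ ^ 2) ≤ ∑ l ∈ D, ‖W i - W l‖ ^ 2 := by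
      have hkey : ∀ j ∈ B, (D.card : ℝ) * ‖W i - W j‖ ^ 2 ≤ ∑ l ∈ D, ‖W i - W l‖ ^ 2 := by
        intro j hj
        rw [← nsmul_eq_mul]
        refine card_nsmul_le_sum D _ _ fun l hl => ?_
        have hjN : j ∈ N i := (mem_sdiff.1 hj).1
        have hlD := mem_sdiff.1 hl
        have hle := hmin j hjN l hlD.2 (mem_erase.1 hlD.1).1
        exact pow_le_pow_left₀ (norm_nonneg _) hle 2
      have h2 : (D.card : ℝ) * ∑ j ∈ B, ‖W i - W j‖ ^ 2
          ≤ (B.card : ℝ) * ∑ l ∈ D, ‖W i - W l‖ ^ 2 := by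
        rw [mul_sum]
        calc ∑ j ∈ B, (D.card : ℝ) * ‖W i - W j‖ ^ 2
            ≤ ∑ _j ∈ B, ∑ l ∈ D, ‖W i - W l‖ ^ 2 := sum_le_sum hkey
          _ = (B.card : ℝ) * ∑ l ∈ D, ‖W i - W l‖ ^ 2 := by
              rw [sum_const, nsmul_eq_mul]
      have hD0 : (0:ℝ) < (D.card : ℝ) := by
        have : 1 ≤ D.card := by omega
        exact_mod_cast this
      have hDsum : (0:ℝ) ≤ ∑ l ∈ D, ‖W i - W l‖ ^ 2 := sum_nonneg fun l _ => by positivity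
      have hBc : (B.card : ℝ) ≤ (D.card : ℝ) := by exact_mod_cast (by omega : B.card ≤ D.card)
      nlinarith [mul_le_mul_of_nonneg_right hBc hDsum]
    rw [hsplit, hsplit2, hAeq]
    gcongr
  -- L1 : any vector selected-or-not satisfies the distance bound
  have hL1 : ∀ b, (p : ℝ) * ‖W b - g‖ ^ 2 ≤ 2 * s b + 2 * X := by
    intro b
    obtain ⟨hcard, hnb, _⟩ := hN b
    set Nc := N b ∩ C with hNc
    have hcNc : p ≤ Nc.card := by
      have h1 : Nc.card + (N b \ C).card = m := by rw [hNc, card_inter_add_card_sdiff, hcard]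
      have h2 : (N b \ C).card ≤ f := by
        calc (N b \ C).card ≤ (univ \ C).card :=
              card_le_card (sdiff_subset_sdiff (subset_univ _) le_rfl)
          _ = f := hcompl
      omega
    have hkey : ∀ j ∈ Nc, ‖W b - g‖ ^ 2 ≤ 2 * ‖W b - W j‖ ^ 2 + 2 * ‖W j - g‖ ^ 2 :=
      fun j _ => sq_dist_tri (W b) (W j) g
    have h1 : (Nc.card : ℝ) * ‖W b - g‖ ^ 2
        ≤ ∑ j ∈ Nc, (2 * ‖W b - W j‖ ^ 2 + 2 * ‖W j - g‖ ^ 2) := by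
      rw [← nsmul_eq_mul]
      exact card_nsmul_le_sum Nc _ _ fun j hj => hkey j hj
    have h2 : ∑ j ∈ Nc, (2 * ‖W b - W j‖ ^ 2 + 2 * ‖W j - g‖ ^ 2)
        = 2 * (∑ j ∈ Nc, ‖W b - W j‖ ^ 2) + 2 * ∑ j ∈ Nc, ‖W j - g‖ ^ 2 := by
      rw [sum_add_distrib, mul_sum, mul_sum]
    have h3 : (∑ j ∈ Nc, ‖W b - W j‖ ^ 2) ≤ s b :=
      sum_le_sum_of_subset_of_nonneg inter_subset_left fun j _ _ => by positivity
    have h4 : (∑ j ∈ Nc, ‖W j - g‖ ^ 2) ≤ X :=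
      sum_le_sum_of_subset_of_nonneg inter_subset_right fun j _ _ => by positivity
    have h5 : (p : ℝ) * ‖W b - g‖ ^ 2 ≤ (Nc.card : ℝ) * ‖W b - g‖ ^ 2 := by
      have : (p:ℝ) ≤ (Nc.card : ℝ) := by exact_mod_cast hcNc
      exact mul_le_mul_of_nonneg_right this (by positivity)
    calc (p : ℝ) * ‖W b - g‖ ^ 2 ≤ (Nc.card : ℝ) * ‖W b - g‖ ^ 2 := h5
      _ ≤ 2 * (∑ j ∈ Nc, ‖W b - W j‖ ^ 2) + 2 * ∑ j ∈ Nc, ‖W j - g‖ ^ 2 := by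
          rw [← h2]; exact h1
      _ ≤ 2 * s b + 2 * X := by gcongr
  -- L3 : total score of selected byzantine indices
  obtain ⟨hTcard, hTsel⟩ := hT
  set k := (T \ C).card with hk
  have hkf : k ≤ f := by
    rw [hk]
    calc (T \ C).card ≤ (univ \ C).card :=
          card_le_card (sdiff_subset_sdiff (subset_univ _) le_rfl)
      _ = f := hcompl
  have hCT : (C \ T).card = k + 2 := by
    have h1 : (T \ C).card + (T ∩ C).card = T.card := card_sdiff_add_card_inter T C
    have h2 : (C \ T).card + (C ∩ T).card = C.card := card_sdiff_add_card_inter C T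
    have h3 : (C ∩ T).card = (T ∩ C).card := by rw [inter_comm]
    have h4 : (T ∩ C).card ≤ T.card := card_le_card inter_subset_left
    rw [hTcard] at h1 h4
    rw [hC] at h2
    omega
  have hL3 : (∑ b ∈ T \ C, s b) ≤ (f : ℝ) / ((f:ℝ) + 2) * Y := by
    have hb : ∀ b ∈ T \ C, ((k:ℝ) + 2) * s b ≤ ∑ i ∈ C \ T, s i := by
      intro b hb
      have : ((C \ T).card : ℝ) * s b ≤ ∑ i ∈ C \ T, s i := by
        rw [← nsmul_eq_mul]
        refine card_nsmul_le_sum _ _ _ fun i hi => ?_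
        exact hTsel b (mem_sdiff.1 hb).1 i (mem_sdiff.1 hi).2
      rw [hCT] at this
      exact_mod_cast this
    have hsum : ((k:ℝ) + 2) * (∑ b ∈ T \ C, s b) ≤ (k:ℝ) * ∑ i ∈ C \ T, s i := by
      rw [mul_sum]
      calc ∑ b ∈ T \ C, ((k:ℝ) + 2) * s b ≤ ∑ _b ∈ T \ C, ∑ i ∈ C \ T, s i :=
            sum_le_sum hb
        _ = (k:ℝ) * ∑ i ∈ C \ T, s i := by rw [sum_const, nsmul_eq_mul, hk]
    have hSY : (∑ i ∈ C \ T, s i) ≤ Y := by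
      calc ∑ i ∈ C \ T, s i ≤ ∑ i ∈ C \ T, ∑ j ∈ C.erase i, ‖W i - W j‖ ^ 2 :=
            sum_le_sum fun i hi => hQ i (mem_sdiff.1 hi).1
        _ ≤ Y := sum_le_sum_of_subset_of_nonneg sdiff_subset
            fun i _ _ => sum_nonneg fun j _ => by positivity
    have hS0 : (0:ℝ) ≤ ∑ b ∈ T \ C, s b := sum_nonneg fun b _ => hs0 b
    have hkR : (k:ℝ) ≤ (f:ℝ) := by exact_mod_cast hkf
    have hk0 : (0:ℝ) ≤ (k:ℝ) := Nat.cast_nonneg _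
    have hf0 : (0:ℝ) ≤ (f:ℝ) := by positivity
    rw [div_mul_eq_mul_div, le_div_iff₀ (by linarith : (0:ℝ) < (f:ℝ) + 2)]
    nlinarith [mul_le_mul_of_nonneg_right hkR hY0,
      mul_le_mul_of_nonneg_left (hsum.trans (mul_le_mul_of_nonneg_left hSY hk0))
        (by linarith : (0:ℝ) ≤ (f:ℝ) + 2)]
  -- combine
  have hmain : (∑ i ∈ T, ‖W i - g‖ ^ 2)
      ≤ (1 + 2 * (f:ℝ) / p) * X + (2 * (f:ℝ) / (((f:ℝ) + 2) * p)) * Y := by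
    have hsplitT : (∑ i ∈ T, ‖W i - g‖ ^ 2)
        = (∑ i ∈ T ∩ C, ‖W i - g‖ ^ 2) + ∑ b ∈ T \ C, ‖W b - g‖ ^ 2 :=
      (sum_inter_add_sum_sdiff _ _ _).symm
    have h1 : (∑ i ∈ T ∩ C, ‖W i - g‖ ^ 2) ≤ X :=
      sum_le_sum_of_subset_of_nonneg inter_subset_right fun i _ _ => by positivity
    have h2 : (∑ b ∈ T \ C, ‖W b - g‖ ^ 2)
        ≤ (2 / (p:ℝ)) * (∑ b ∈ T \ C, s b) + (k:ℝ) * ((2 / (p:ℝ)) * X) := by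
      have hb : ∀ b ∈ T \ C, ‖W b - g‖ ^ 2 ≤ (2 / (p:ℝ)) * s b + (2 / (p:ℝ)) * X := by
        intro b _
        have := hL1 b
        rw [div_mul_eq_mul_div, div_mul_eq_mul_div, ← add_div,
          le_div_iff₀ hp0R, mul_comm]
        linarith
      calc (∑ b ∈ T \ C, ‖W b - g‖ ^ 2)
          ≤ ∑ b ∈ T \ C, ((2 / (p:ℝ)) * s b + (2 / (p:ℝ)) * X) := sum_le_sum hb
        _ = (2 / (p:ℝ)) * (∑ b ∈ T \ C, s b) + (k:ℝ) * ((2 / (p:ℝ)) * X) := by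
            rw [sum_add_distrib, ← mul_sum, sum_const, nsmul_eq_mul, hk]
    have h3 : (2 / (p:ℝ)) * (∑ b ∈ T \ C, s b)
        ≤ (2 * (f:ℝ) / (((f:ℝ) + 2) * p)) * Y := by
      calc (2 / (p:ℝ)) * (∑ b ∈ T \ C, s b)
          ≤ (2 / (p:ℝ)) * ((f : ℝ) / ((f:ℝ) + 2) * Y) := by
            have h20 : (0:ℝ) ≤ 2 / (p:ℝ) := by positivity
            exact mul_le_mul_of_nonneg_left hL3 h20
        _ = (2 * (f:ℝ) / (((f:ℝ) + 2) * p)) * Y := by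
            field_simp
    have h4 : (k:ℝ) * ((2 / (p:ℝ)) * X) ≤ (2 * (f:ℝ) / p) * X := by
      have hkR : (k:ℝ) ≤ (f:ℝ) := by exact_mod_cast hkf
      have h5 : (k:ℝ) * (2 / (p:ℝ)) ≤ 2 * (f:ℝ) / p := by
        rw [mul_div_assoc']
        exact div_le_div_of_nonneg_right (by linarith) hp0R.le |>.trans_eq rfl
      calc (k:ℝ) * ((2 / (p:ℝ)) * X) = ((k:ℝ) * (2 / (p:ℝ))) * X := by ring
        _ ≤ (2 * (f:ℝ) / p) * X := mul_le_mul_of_nonneg_right h5 hX0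
    calc (∑ i ∈ T, ‖W i - g‖ ^ 2)
        = (∑ i ∈ T ∩ C, ‖W i - g‖ ^ 2) + ∑ b ∈ T \ C, ‖W b - g‖ ^ 2 := hsplitT
      _ ≤ X + ((2 / (p:ℝ)) * (∑ b ∈ T \ C, s b) + (k:ℝ) * ((2 / (p:ℝ)) * X)) := by
          linarith
      _ ≤ X + ((2 * (f:ℝ) / (((f:ℝ) + 2) * p)) * Y + (2 * (f:ℝ) / p) * X) := by
          linarith
      _ = (1 + 2 * (f:ℝ) / p) * X + (2 * (f:ℝ) / (((f:ℝ) + 2) * p)) * Y := by ring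
  -- norm of average
  have havg : multiKrumAvg m W T - g = (m : ℝ)⁻¹ • ∑ i ∈ T, (W i - g) := by
    rw [multiKrumAvg, sum_sub_distrib, smul_sub, sum_const, hTcard]
    congr 1
    rw [← Nat.cast_smul_eq_nsmul ℝ, inv_smul_smul₀ (ne_of_gt hm0R)]
  have hnorm : ‖multiKrumAvg m W T - g‖ ^ 2 ≤ (m:ℝ)⁻¹ * ∑ i ∈ T, ‖W i - g‖ ^ 2 := by
    rw [havg, norm_smul]
    have h1 : ‖∑ i ∈ T, (W i - g)‖ ≤ ∑ i ∈ T, ‖W i - g‖ := norm_sum_le _ _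
    have h2 : (∑ i ∈ T, ‖W i - g‖) ^ 2 ≤ (m:ℝ) * ∑ i ∈ T, ‖W i - g‖ ^ 2 := by
      have := sq_sum_le_card_mul_sum_sq (s := T) (f := fun i => ‖W i - g‖)
      rw [hTcard] at this
      exact this
    have h3 : ‖((m:ℝ)⁻¹)‖ = (m:ℝ)⁻¹ := by
      rw [Real.norm_eq_abs, abs_of_pos (by positivity)]
    rw [h3, mul_pow]
    have h4 : ‖∑ i ∈ T, (W i - g)‖ ^ 2 ≤ (m:ℝ) * ∑ i ∈ T, ‖W i - g‖ ^ 2 :=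
      (pow_le_pow_left₀ (norm_nonneg _) h1 2).trans h2
    calc (m:ℝ)⁻¹ ^ 2 * ‖∑ i ∈ T, (W i - g)‖ ^ 2
        ≤ (m:ℝ)⁻¹ ^ 2 * ((m:ℝ) * ∑ i ∈ T, ‖W i - g‖ ^ 2) := by
          exact mul_le_mul_of_nonneg_left h4 (by positivity)
      _ = (m:ℝ)⁻¹ * ∑ i ∈ T, ‖W i - g‖ ^ 2 := by
          field_simp
  calc ‖multiKrumAvg m W T - g‖ ^ 2 ≤ (m:ℝ)⁻¹ * ∑ i ∈ T, ‖W i - g‖ ^ 2 := hnorm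
    _ ≤ (m:ℝ)⁻¹ * ((1 + 2 * (f:ℝ) / p) * X + (2 * (f:ℝ) / (((f:ℝ) + 2) * p)) * Y) :=
        mul_le_mul_of_nonneg_left hmain (by positivity)

lemma coord_abs_le_norm {d : ℕ} (x : EuclideanSpace ℝ (Fin d)) (k : Fin d) :
    |x k| ≤ ‖x‖ := by
  have h := EuclideanSpace.norm_eq x
  have h2 : (x k) ^ 2 ≤ ∑ l, ‖x l‖ ^ 2 := by
    have : ‖x k‖ ^ 2 ≤ ∑ l, ‖x l‖ ^ 2 :=
      Finset.single_le_sum (f := fun l => ‖x l‖ ^ 2) (fun l _ => by positivity) (Finset.mem_univ k)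
    simpa [Real.norm_eq_abs, sq_abs] using this
  rw [h]
  rw [← Real.sqrt_sq (abs_nonneg (x k))]
  apply Real.sqrt_le_sqrt
  simpa [sq_abs] using h2

section indep
variable {Ω : Type*} [MeasurableSpace Ω] {μ : Measure Ω} [IsProbabilityMeasure μ]

lemma pair_integral {d : ℕ} (X Y : Ω → EuclideanSpace ℝ (Fin d))
    (hX : Measurable X) (hY : Measurable Y)
    (hXi : Integrable X μ) (hYi : Integrable Y μ)
    (hX2 : Integrable (fun ω => ‖X ω‖ ^ 2) μ) (hY2 : Integrable (fun ω => ‖Y ω‖ ^ 2) μ)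
    (hXm : ∫ ω, X ω ∂μ = 0) (hYm : ∫ ω, Y ω ∂μ = 0)
    (hindep : IndepFun X Y μ) :
    ∫ ω, ⟪X ω, Y ω⟫ ∂μ = 0 := by
  have hco : ∀ ω, ⟪X ω, Y ω⟫ = ∑ k : Fin d, X ω k * Y ω k := by
    intro ω
    rw [PiLp.inner_apply]
    simp [RCLike.inner_apply, conj_trivial]
    exact Finset.sum_congr rfl fun _ _ => mul_comm _ _
  have hcomeas : ∀ (Z : Ω → EuclideanSpace ℝ (Fin d)), Measurable Z →
      ∀ k, Measurable (fun ω => Z ω k) := fun Z hZ k => (measurable_pi_apply k).comp ((WithLp.measurable_ofLp 2 _).comp hZ)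
  have hprodint : ∀ k : Fin d, Integrable (fun ω => X ω k * Y ω k) μ := by
    intro k
    refine Integrable.mono (((hX2.add hY2)).div_const 2) ?_ ?_
    · exact ((hcomeas X hX k).mul (hcomeas Y hY k)).aestronglyMeasurable
    · filter_upwards with ω
      rw [Real.norm_eq_abs, abs_mul, Real.norm_eq_abs]
      have h1 := coord_abs_le_norm (X ω) k
      have h2 := coord_abs_le_norm (Y ω) k
      have h3 : |X ω k| * |Y ω k| ≤ ‖X ω‖ * ‖Y ω‖ :=
        mul_le_mul h1 h2 (abs_nonneg _) (norm_nonneg _)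
      have h4 : ‖X ω‖ * ‖Y ω‖ ≤ (‖X ω‖ ^ 2 + ‖Y ω‖ ^ 2) / 2 := by
        nlinarith [sq_nonneg (‖X ω‖ - ‖Y ω‖)]
      calc |X ω k| * |Y ω k| ≤ (‖X ω‖ ^ 2 + ‖Y ω‖ ^ 2) / 2 := h3.trans h4
        _ ≤ |(‖X ω‖ ^ 2 + ‖Y ω‖ ^ 2) / 2| := le_abs_self _
  have hcoint : ∀ (Z : Ω → EuclideanSpace ℝ (Fin d)), Integrable Z μ →
      ∀ k, Integrable (fun ω => Z ω k) μ := by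
    intro Z hZ k
    exact (EuclideanSpace.proj k : EuclideanSpace ℝ (Fin d) →L[ℝ] ℝ).integrable_comp hZ
  calc ∫ ω, ⟪X ω, Y ω⟫ ∂μ = ∫ ω, ∑ k : Fin d, X ω k * Y ω k ∂μ := by
        simp_rw [hco]
    _ = ∑ k : Fin d, ∫ ω, X ω k * Y ω k ∂μ := integral_finset_sum _ fun k _ => hprodint k
    _ = 0 := by
      refine Finset.sum_eq_zero fun k _ => ?_
      have hik : IndepFun (fun ω => X ω k) (fun ω => Y ω k) μ :=
        by have := hindep.comp ((measurable_pi_apply k).comp (WithLp.measurable_ofLp 2 _))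
             ((measurable_pi_apply k).comp (WithLp.measurable_ofLp 2 _)); exact this
      have hz : ∀ (Z : Ω → EuclideanSpace ℝ (Fin d)), Integrable Z μ →
          (∫ ω, Z ω ∂μ = 0) → ∫ ω, Z ω k ∂μ = 0 := by
        intro Z hZ hZm
        have := (EuclideanSpace.proj (𝕜 := ℝ) (ι := Fin d) k).integral_comp_comm hZ
        simpa [hZm] using this
      have h1 := hik.integral_mul_eq_mul_integral (hcoint X hXi k).1 (hcoint Y hYi k).1
      have h2 : ∫ ω, X ω k * Y ω k ∂μ = integral μ ((fun ω => X ω k) * fun ω => Y ω k) := rfl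
      rw [h2, h1, hz X hXi hXm, hz Y hYi hYm, zero_mul]

lemma inner_integrable {d : ℕ} (X Y : Ω → EuclideanSpace ℝ (Fin d))
    (hX : Measurable X) (hY : Measurable Y)
    (hX2 : Integrable (fun ω => ‖X ω‖ ^ 2) μ) (hY2 : Integrable (fun ω => ‖Y ω‖ ^ 2) μ) :
    Integrable (fun ω => ⟪X ω, Y ω⟫) μ := by
  refine Integrable.mono ((hX2.add hY2).div_const 2) ?_ ?_
  · exact (hX.inner hY).aestronglyMeasurable
  · filter_upwards with ω
    rw [Real.norm_eq_abs]
    have h1 := abs_real_inner_le_norm (X ω) (Y ω)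
    have h2 : ‖X ω‖ * ‖Y ω‖ ≤ (‖X ω‖ ^ 2 + ‖Y ω‖ ^ 2) / 2 := by
      nlinarith [sq_nonneg (‖X ω‖ - ‖Y ω‖)]
    calc |⟪X ω, Y ω⟫| ≤ (‖X ω‖ ^ 2 + ‖Y ω‖ ^ 2) / 2 := h1.trans h2
      _ ≤ ‖(‖X ω‖ ^ 2 + ‖Y ω‖ ^ 2) / 2‖ := le_abs_self _

lemma pair_dist_integral {d : ℕ} (X Y : Ω → EuclideanSpace ℝ (Fin d))
    (hX : Measurable X) (hY : Measurable Y)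
    (hXi : Integrable X μ) (hYi : Integrable Y μ)
    (hX2 : Integrable (fun ω => ‖X ω‖ ^ 2) μ) (hY2 : Integrable (fun ω => ‖Y ω‖ ^ 2) μ)
    (hXm : ∫ ω, X ω ∂μ = 0) (hYm : ∫ ω, Y ω ∂μ = 0)
    (hindep : IndepFun X Y μ) :
    ∫ ω, ‖X ω - Y ω‖ ^ 2 ∂μ = (∫ ω, ‖X ω‖ ^ 2 ∂μ) + ∫ ω, ‖Y ω‖ ^ 2 ∂μ := by
  have hexp : ∀ ω, ‖X ω - Y ω‖ ^ 2 = ‖X ω‖ ^ 2 - 2 * ⟪X ω, Y ω⟫ + ‖Y ω‖ ^ 2 :=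
    fun ω => norm_sub_sq_real (X ω) (Y ω)
  have hii := inner_integrable X Y hX hY hX2 hY2
  calc ∫ ω, ‖X ω - Y ω‖ ^ 2 ∂μ
      = ∫ ω, (‖X ω‖ ^ 2 - 2 * ⟪X ω, Y ω⟫ + ‖Y ω‖ ^ 2) ∂μ := by simp_rw [hexp]
    _ = (∫ ω, ‖X ω‖ ^ 2 ∂μ) - 2 * (∫ ω, ⟪X ω, Y ω⟫ ∂μ) + ∫ ω, ‖Y ω‖ ^ 2 ∂μ := by
        have h1 : Integrable (fun ω => ‖X ω‖ ^ 2 - 2 * ⟪X ω, Y ω⟫) μ :=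
          hX2.sub (hii.const_mul 2)
        have h2 : Integrable (fun ω => 2 * ⟪X ω, Y ω⟫) μ := hii.const_mul 2
        rw [integral_add h1 hY2, integral_sub hX2 h2, integral_const_mul]
    _ = (∫ ω, ‖X ω‖ ^ 2 ∂μ) + ∫ ω, ‖Y ω‖ ^ 2 ∂μ := by
        rw [pair_integral X Y hX hY hXi hYi hX2 hY2 hXm hYm hindep]; ring

lemma integral_sqrt_le {G : Ω → ℝ} (hG : Integrable G μ) (hG0 : ∀ ω, 0 ≤ G ω) :
    Integrable (fun ω => Real.sqrt (G ω)) μ ∧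
      (∫ ω, Real.sqrt (G ω) ∂μ) ≤ Real.sqrt (∫ ω, G ω ∂μ) := by
  have hmeas : AEStronglyMeasurable (fun ω => Real.sqrt (G ω)) μ :=
    Real.continuous_sqrt.comp_aestronglyMeasurable hG.1
  have hint : Integrable (fun ω => Real.sqrt (G ω)) μ := by
    refine Integrable.mono ((hG.add (integrable_const 1)).div_const 2) hmeas ?_
    filter_upwards with ω
    rw [Real.norm_eq_abs, abs_of_nonneg (Real.sqrt_nonneg _)]
    have h1 : Real.sqrt (G ω) ^ 2 = G ω := Real.sq_sqrt (hG0 ω)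
    have h2 : Real.sqrt (G ω) ≤ (G ω + 1) / 2 := by nlinarith [sq_nonneg (Real.sqrt (G ω) - 1)]
    exact h2.trans (le_abs_self _)
  refine ⟨hint, ?_⟩
  set c := ∫ ω, Real.sqrt (G ω) ∂μ with hc
  have hc0 : 0 ≤ c := integral_nonneg fun ω => Real.sqrt_nonneg _
  have hexp : ∀ ω, (Real.sqrt (G ω) - c) ^ 2 = G ω - 2 * c * Real.sqrt (G ω) + c ^ 2 := by
    intro ω
    rw [sub_sq, Real.sq_sqrt (hG0 ω)]
    ring
  have h1 : Integrable (fun ω => G ω - 2 * c * Real.sqrt (G ω)) μ :=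
    hG.sub (hint.const_mul (2 * c))
  have h2 : Integrable (fun ω => 2 * c * Real.sqrt (G ω)) μ := hint.const_mul (2 * c)
  have h0 : 0 ≤ ∫ ω, (Real.sqrt (G ω) - c) ^ 2 ∂μ := integral_nonneg fun ω => sq_nonneg _
  have heq : ∫ ω, (Real.sqrt (G ω) - c) ^ 2 ∂μ = (∫ ω, G ω ∂μ) - c ^ 2 := by
    calc ∫ ω, (Real.sqrt (G ω) - c) ^ 2 ∂μ
        = ∫ ω, (G ω - 2 * c * Real.sqrt (G ω) + c ^ 2) ∂μ := by simp_rw [hexp]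
      _ = (∫ ω, G ω ∂μ) - 2 * c * c + c ^ 2 := by
          rw [integral_add h1 (integrable_const _), integral_sub hG h2, integral_const_mul,
            integral_const]
          simp [← hc]
      _ = (∫ ω, G ω ∂μ) - c ^ 2 := by ring
  have hle : c ^ 2 ≤ ∫ ω, G ω ∂μ := by rw [heq] at h0; linarith
  exact (Real.le_sqrt hc0 (le_trans (sq_nonneg c) hle)).2 hle

end indep


lemma final_step {d : ℕ} (v g : EuclideanSpace ℝ (Fin d)) (r : ℝ) (hr0 : 0 ≤ r)
    (hr : r < ‖g‖) (hv : ‖v - g‖ ≤ r) :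
    ⟪v, g⟫ ≥ (1 - r / ‖g‖) * ‖g‖ ^ 2 ∧ (0 : ℝ) < (1 - r / ‖g‖) * ‖g‖ ^ 2 := by
  have hg0 : 0 < ‖g‖ := lt_of_le_of_lt hr0 hr
  have hr1 : r / ‖g‖ < 1 := (div_lt_one hg0).2 hr
  have key : ⟪v, g⟫ = ⟪v - g, g⟫ + ‖g‖ ^ 2 := by
    rw [inner_sub_left, real_inner_self_eq_norm_sq]
    ring
  have habs : |⟪v - g, g⟫| ≤ ‖v - g‖ * ‖g‖ := abs_real_inner_le_norm _ _
  have h5 : ‖v - g‖ * ‖g‖ ≤ r * ‖g‖ := mul_le_mul_of_nonneg_right hv hg0.le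
  have h6 : (1 - r / ‖g‖) * ‖g‖ ^ 2 = ‖g‖ ^ 2 - r * ‖g‖ := by
    field_simp
  constructor
  · rw [key, h6]
    have := abs_le.1 habs
    linarith [this.1]
  · rw [h6]
    nlinarith

set_option maxHeartbeats 2000000 in
/-- condition (i) of (α,f)-Byzantine resilience of multi-Krum (Lemma 1).
Under the variance condition `η(n,f)·√d·σ < ‖g‖`, with `sin α = η(n,f)·√d·σ/‖g‖`,
one has `⟪E[multi-Krum], g⟫ ≥ (1 - sin α)·‖g‖² > 0`. -/
theorem multiKrum_cone (n f d : ℕ) (hnf : 2 * f + 2 < n) (hd : 1 ≤ d)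
    {Ω : Type*} [MeasurableSpace Ω] (μ : Measure Ω) [IsProbabilityMeasure μ]
    (W : Fin n → Ω → EuclideanSpace ℝ (Fin d))
    (C : Finset (Fin n)) (hCcard : C.card = n - f)
    (g : EuclideanSpace ℝ (Fin d)) (σ : ℝ) (hσ : 0 ≤ σ)
    (hmeas : ∀ i, Measurable (W i))
    (hindep : iIndepFun (fun i : {x // x ∈ C} => W i.1) μ)
    (hid : ∀ i ∈ C, ∀ j ∈ C, IdentDistrib (W i) (W j) μ μ)
    (hint : ∀ i ∈ C, Integrable (W i) μ)
    (hmean : ∀ i ∈ C, ∫ ω, W i ω ∂μ = g)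
    (hint2 : ∀ i ∈ C, Integrable (fun ω => ‖W i ω - g‖ ^ 2) μ)
    (hvar : ∀ i ∈ C, ∫ ω, ‖W i ω - g‖ ^ 2 ∂μ = d * σ ^ 2)
    (hvarcond : eta n f * Real.sqrt d * σ < ‖g‖)
    (N : Ω → Fin n → Finset (Fin n))
    (hN : ∀ ω, IsNeighborhood f (fun i => W i ω) (N ω))
    (T : Ω → Finset (Fin n))
    (hT : ∀ ω, IsSelection (krumScore (fun i => W i ω) (N ω)) (n - f - 2) (T ω))
    (MK : Ω → EuclideanSpace ℝ (Fin d))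
    (hMK : ∀ ω, MK ω = multiKrumAvg (n - f - 2) (fun i => W i ω) (T ω))
    (hMKint : Integrable MK μ) :
    ⟪∫ ω, MK ω ∂μ, g⟫ ≥ (1 - eta n f * Real.sqrt d * σ / ‖g‖) * ‖g‖ ^ 2 ∧
      (0 : ℝ) < (1 - eta n f * Real.sqrt d * σ / ‖g‖) * ‖g‖ ^ 2 := by

  classical
  have hm1 : 1 ≤ n - f - 2 := by omega
  have hp1 : 1 ≤ n - 2*f - 2 := by omega
  set F := (f : ℝ) with hF
  set P := ((n - 2*f - 2 : ℕ) : ℝ) with hPdef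
  have hP1 : (1:ℝ) ≤ P := by rw [hPdef]; exact_mod_cast hp1
  have hP0 : (0:ℝ) < P := by linarith
  have hF0 : (0:ℝ) ≤ F := by rw [hF]; positivity
  have hF01 : F = 0 ∨ 1 ≤ F := by
    rcases Nat.eq_zero_or_pos f with h | h
    · left; rw [hF, h]; norm_num
    · right; rw [hF]; exact_mod_cast h
  have hc1 : ((n - f - 2 : ℕ) : ℝ) = P + F := by
    rw [hPdef, hF]; push_cast [show n - f - 2 = (n - 2*f - 2) + f by omega]; ring
  have hc2 : ((n - f : ℕ) : ℝ) = P + F + 2 := by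
    rw [hPdef, hF]; push_cast [show n - f = (n - 2*f - 2) + f + 2 by omega]; ring
  have hc3 : ((n - f - 1 : ℕ) : ℝ) = P + F + 1 := by
    rw [hPdef, hF]; push_cast [show n - f - 1 = (n - 2*f - 2) + f + 1 by omega]; ring
  have hc4 : (n : ℝ) = P + 2*F + 2 := by
    have h : ((n - 2*f - 2) + 2*f + 2 : ℕ) = n := by omega
    have h2 : (((n - 2*f - 2) + 2*f + 2 : ℕ) : ℝ) = (n : ℝ) := by exact_mod_cast h
    push_cast at h2
    rw [hPdef, hF]
    linarith
  set dσ2 := (d:ℝ) * σ^2 with hdσ2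
  have hdσ0 : (0:ℝ) ≤ dσ2 := by positivity
  -- pairwise second moments
  have hpair : ∀ i ∈ C, ∀ j ∈ C, i ≠ j →
      ∫ ω, ‖W i ω - W j ω‖ ^ 2 ∂μ = 2 * dσ2 := by
    intro i hi j hj hij
    have hXm : ∫ ω, (W i ω - g) ∂μ = 0 := by
      rw [integral_sub (hint i hi) (integrable_const g), hmean i hi, integral_const]
      simp
    have hYm : ∫ ω, (W j ω - g) ∂μ = 0 := by
      rw [integral_sub (hint j hj) (integrable_const g), hmean j hj, integral_const]
      simp
    have hWij : IndepFun (W i) (W j) μ :=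
      hindep.indepFun (i := ⟨i, hi⟩) (j := ⟨j, hj⟩) (fun h => hij (congrArg Subtype.val h))
    have hind : IndepFun (fun ω => W i ω - g) (fun ω => W j ω - g) μ :=
      hWij.comp (measurable_id.sub_const g) (measurable_id.sub_const g)
    have := pair_dist_integral (μ := μ) (fun ω => W i ω - g) (fun ω => W j ω - g)
      ((hmeas i).sub_const g) ((hmeas j).sub_const g)
      ((hint i hi).sub (integrable_const g)) ((hint j hj).sub (integrable_const g))
      (hint2 i hi) (hint2 j hj) hXm hYm hind
    have heq : ∀ ω, (W i ω - g) - (W j ω - g) = W i ω - W j ω := fun ω => by abel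
    simp_rw [heq] at this
    rw [this, hvar i hi, hvar j hj]
    ring
  have hpint : ∀ i ∈ C, ∀ j ∈ C, Integrable (fun ω => ‖W i ω - W j ω‖ ^ 2) μ := by
    intro i hi j hj
    refine Integrable.mono (((hint2 i hi).const_mul 2).add ((hint2 j hj).const_mul 2)) ?_ ?_
    · exact ((((hmeas i).sub (hmeas j)).norm).pow_const 2).aestronglyMeasurable
    · filter_upwards with ω
      rw [Real.norm_eq_abs, abs_of_nonneg (by positivity)]
      have h1 := sq_dist_tri (W i ω) g (W j ω)
      rw [norm_sub_rev g (W j ω)] at h1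
      exact h1.trans (le_abs_self _)
  -- aggregated quantities
  set X := fun ω => ∑ i ∈ C, ‖W i ω - g‖ ^ 2 with hXdef
  set Y := fun ω => ∑ i ∈ C, ∑ j ∈ C.erase i, ‖W i ω - W j ω‖ ^ 2 with hYdef
  have hXint : Integrable X μ := integrable_finset_sum C fun i hi => hint2 i hi
  have hYint : Integrable Y μ := integrable_finset_sum C fun i hi =>
    integrable_finset_sum _ fun j hj => hpint i hi j (mem_of_mem_erase hj)
  have hXval : ∫ ω, X ω ∂μ = (P + F + 2) * dσ2 := by
    rw [hXdef, integral_finset_sum C fun i hi => hint2 i hi]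
    rw [sum_congr rfl fun i hi => hvar i hi, sum_const, hCcard, nsmul_eq_mul, hc2, hdσ2]
  have hYval : ∫ ω, Y ω ∂μ = (P + F + 2) * ((P + F + 1) * (2 * dσ2)) := by
    rw [hYdef, integral_finset_sum C fun i hi =>
      integrable_finset_sum _ fun j hj => hpint i hi j (mem_of_mem_erase hj)]
    have hrow : ∀ i ∈ C, (∫ ω, ∑ j ∈ C.erase i, ‖W i ω - W j ω‖ ^ 2 ∂μ)
        = (P + F + 1) * (2 * dσ2) := by
      intro i hi
      rw [integral_finset_sum _ fun j hj => hpint i hi j (mem_of_mem_erase hj)]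
      rw [sum_congr rfl fun j hj =>
        hpair i hi j (mem_of_mem_erase hj) (Ne.symm (ne_of_mem_erase hj))]
      rw [sum_const, card_erase_of_mem hi, hCcard, nsmul_eq_mul]
      rw [show ((n - f - 1 : ℕ) : ℝ) = P + F + 1 from hc3]
    rw [sum_congr rfl hrow, sum_const, hCcard, nsmul_eq_mul, hc2]
  -- the dominating integrable bound
  set c1 := (1 + 2*F/P) with hc1def
  set c2 := (2*F/((F+2)*P)) with hc2def
  set G := fun ω => (P + F)⁻¹ * (c1 * X ω + c2 * Y ω) with hGdef
  have hGpt : ∀ ω, ‖MK ω - g‖ ^ 2 ≤ G ω := by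
    intro ω
    rw [hMK ω]
    have := pointwise_bound f hnf (fun i => W i ω) C hCcard g (N ω) (hN ω) (T ω) (hT ω)
    rw [hc1, hPdef] at this
    exact this
  have hG0 : ∀ ω, 0 ≤ G ω := fun ω => le_trans (sq_nonneg _) (hGpt ω)
  have hGint : Integrable G μ :=
    (((hXint.const_mul c1).add (hYint.const_mul c2)).const_mul ((P + F)⁻¹))
  have hGval : ∫ ω, G ω ∂μ
      = (P + F)⁻¹ * (c1 * ((P + F + 2) * dσ2)
          + c2 * ((P + F + 2) * ((P + F + 1) * (2 * dσ2)))) := by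
    rw [hGdef]
    rw [integral_const_mul, integral_add (hXint.const_mul c1) (hYint.const_mul c2),
      integral_const_mul, integral_const_mul, hXval, hYval]
  -- key numeric bound
  set ηsq := 2 * ((n : ℝ) - f +
    ((f : ℝ) * ((n : ℝ) - f - 2) + (f : ℝ) ^ 2 * ((n : ℝ) - f - 1)) / ((n : ℝ) - 2 * f - 2))
    with hηsq
  have hηsq' : ηsq = 2 * ((P+F+2) + (F*(P+F) + F^2*(P+F+1))/P) := by
    rw [hηsq, hc4, hF]
    ring_nf
  have hηsq0 : 0 ≤ ηsq := by
    rw [hηsq']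
    have h1 : 0 ≤ F*(P+F) + F^2*(P+F+1) := by positivity
    have h2 : 0 ≤ (F*(P+F) + F^2*(P+F+1))/P := div_nonneg h1 hP0.le
    nlinarith
  have hGle : ∫ ω, G ω ∂μ ≤ ηsq * dσ2 := by
    rw [hGval, hηsq']
    have hb := krum_alg F P hF01 hF0 hP1
    rw [hc1def, hc2def]
    calc (P + F)⁻¹ * ((1 + 2*F/P) * ((P + F + 2) * dσ2)
          + (2*F/((F+2)*P)) * ((P + F + 2) * ((P + F + 1) * (2 * dσ2))))
        = ((P + F)⁻¹ * ((1 + 2*F/P) * (P+F+2)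
            + (2*F/((F+2)*P)) * (2*(P+F+2)*(P+F+1)))) * dσ2 := by ring
      _ ≤ (2 * ((P+F+2) + (F*(P+F) + F^2*(P+F+1))/P)) * dσ2 :=
          mul_le_mul_of_nonneg_right hb hdσ0
  -- from second moment to the norm of the expectation
  have hsqrt := integral_sqrt_le (μ := μ) hGint hG0
  have hMKsubint : Integrable (fun ω => MK ω - g) μ := hMKint.sub (integrable_const g)
  have hEsub : ∫ ω, (MK ω - g) ∂μ = (∫ ω, MK ω ∂μ) - g := by
    rw [integral_sub hMKint (integrable_const g), integral_const]
    simp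
  have hnormle : ‖(∫ ω, MK ω ∂μ) - g‖ ≤ eta n f * Real.sqrt d * σ := by
    have h1 : ‖(∫ ω, MK ω ∂μ) - g‖ ≤ ∫ ω, ‖MK ω - g‖ ∂μ := by
      rw [← hEsub]
      exact norm_integral_le_integral_norm _
    have h2 : (∫ ω, ‖MK ω - g‖ ∂μ) ≤ ∫ ω, Real.sqrt (G ω) ∂μ := by
      refine integral_mono hMKsubint.norm hsqrt.1 fun ω => ?_
      exact (Real.le_sqrt (norm_nonneg _) (hG0 ω)).2 (hGpt ω)
    have h3 : Real.sqrt (∫ ω, G ω ∂μ) ≤ Real.sqrt (ηsq * dσ2) := Real.sqrt_le_sqrt hGle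
    have hetaeq : eta n f = Real.sqrt ηsq := by rw [hηsq]; rfl
    have h4 : Real.sqrt (ηsq * dσ2) = eta n f * Real.sqrt d * σ := by
      rw [hdσ2, Real.sqrt_mul hηsq0, Real.sqrt_mul (by positivity : (0:ℝ) ≤ (d:ℝ)),
        Real.sqrt_sq hσ, hetaeq]
      ring
    calc ‖(∫ ω, MK ω ∂μ) - g‖ ≤ ∫ ω, Real.sqrt (G ω) ∂μ := h1.trans h2
      _ ≤ Real.sqrt (∫ ω, G ω ∂μ) := hsqrt.2
      _ ≤ Real.sqrt (ηsq * dσ2) := h3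
      _ = eta n f * Real.sqrt d * σ := h4
  have heta0 : 0 ≤ eta n f := by unfold eta; exact Real.sqrt_nonneg _
  exact final_step (∫ ω, MK ω ∂μ) g (eta n f * Real.sqrt d * σ)
    (mul_nonneg (mul_nonneg heta0 (Real.sqrt_nonneg _)) hσ) hvarcond hnormle
end

section
/- Fix integers n, f, d with 2f + 2 < n and d ≥ 1. Let W_1, …, W_n be vectors in ℝ^d and let B ⊆ {1,…,n} be a set of 'Byzantine' indices with |B| ≤ f. For each index i let N(i) be a set of n − f − 2 indices j ≠ i minimizing ‖W_i − W_j‖ (ties broken by a fixed rule), let s(i) = Σ_{j∈N(i)} ‖W_i − W_j‖², let δ_c(i) = |N(i) \ B| and δ_b(i) = |N(i) ∩ B|. Let k ∈ B and let i ∉ B be a correct index with s(k) ≤ s(i); and let ζ(i) ∉ B be a correct index with ζ(i) ∉ N(i), ζ(i) ≠ i, such that ‖W_i − W_j‖ ≤ ‖W_i − W_{ζ(i)}‖ for every j ∈ N(i). Then ‖W_k − (1/δ_c(k))·Σ_{j∈N(k)\B} W_j‖² ≤ (1/δ_c(k))·( Σ_{j∈N(i)\B} ‖W_i − W_j‖²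 + δ_b(i)·‖W_i − W_{ζ(i)}‖² ). -/
open Finset

/-- core deterministic inequality of the Byzantine case of Lemma 1.
If a Byzantine index `k` scores at least as well as a correct index `i`, and `ζ` is a
correct non-neighbor of `i` farther from `W i` than all neighbors of `i`, then `W k` is
close to the average of its correct neighbors:
`‖W k - (1/δ_c(k))·Σ_{j ∈ N k \ B} W j‖² ≤ (1/δ_c(k))·(Σ_{j ∈ N i \ B} ‖W i - W j‖² + δ_b(i)·‖W i - W ζ‖²)`. -/
theorem byzantine_close_to_correct_average (d n f : ℕ) (hd : 1 ≤ d)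
    (hnf : 2 * f + 2 < n)
    (W : Fin n → EuclideanSpace ℝ (Fin d))
    (B : Finset (Fin n)) (hBcard : B.card ≤ f)
    (N : Fin n → Finset (Fin n))
    (hNcard : ∀ i, (N i).card = n - f - 2)
    (hNself : ∀ i, i ∉ N i)
    (hNmin : ∀ i, ∀ j ∈ N i, ∀ l, l ∉ N i → l ≠ i → ‖W i - W j‖ ≤ ‖W i - W l‖)
    (k i : Fin n) (hk : k ∈ B) (hi : i ∉ B)
    (hscore : krumScore W N k ≤ krumScore W N i)
    (ζ : Fin n) (hζB : ζ ∉ B) (hζN : ζ ∉ N i) (hζi : ζ ≠ i)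
    (hζfar : ∀ j ∈ N i, ‖W i - W j‖ ≤ ‖W i - W ζ‖) :
    ‖W k - ((N k \ B).card : ℝ)⁻¹ • ∑ j ∈ N k \ B, W j‖ ^ 2 ≤
      ((N k \ B).card : ℝ)⁻¹ *
        ((∑ j ∈ N i \ B, ‖W i - W j‖ ^ 2) + ((N i ∩ B).card : ℝ) * ‖W i - W ζ‖ ^ 2) := by
  set s := N k \ B with hs
  set m := s.card with hm
  have hmpos : 0 < m := by
    have h1 : (N k).card ≤ s.card + B.card := by
      have := Finset.card_le_card_sdiff_add_card (s := N k) (t := B)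
      simpa [hs] using this
    have : n - f - 2 ≤ m + f := by
      have := h1
      rw [hNcard] at this
      omega
    omega
  have hmR : (0:ℝ) < (m:ℝ) := by exact_mod_cast hmpos
  -- Step 1: Jensen / Cauchy-Schwarz
  have step1 : ‖W k - (m:ℝ)⁻¹ • ∑ j ∈ s, W j‖ ^ 2 ≤ (m:ℝ)⁻¹ * ∑ j ∈ s, ‖W k - W j‖ ^ 2 := by
    have hrw : W k - (m:ℝ)⁻¹ • ∑ j ∈ s, W j = (m:ℝ)⁻¹ • ∑ j ∈ s, (W k - W j) := by
      rw [Finset.sum_sub_distrib, smul_sub, Finset.sum_const, ← Nat.cast_smul_eq_nsmul ℝ,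
        smul_smul, inv_mul_cancel₀ hmR.ne', one_smul]
    rw [hrw, norm_smul]
    have h1 : ‖∑ j ∈ s, (W k - W j)‖ ≤ ∑ j ∈ s, ‖W k - W j‖ := norm_sum_le _ _
    have h2 : (∑ j ∈ s, ‖W k - W j‖) ^ 2 ≤ (m:ℝ) * ∑ j ∈ s, ‖W k - W j‖ ^ 2 := by
      have := sq_sum_le_card_mul_sum_sq (s := s) (f := fun j => ‖W k - W j‖)
      push_cast at this ⊢
      convert this using 2
    have h3 : ‖∑ j ∈ s, (W k - W j)‖ ^ 2 ≤ (m:ℝ) * ∑ j ∈ s, ‖W k - W j‖ ^ 2 :=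
      le_trans (pow_le_pow_left₀ (norm_nonneg _) h1 2) h2
    rw [mul_pow, norm_inv, Real.norm_natCast]
    calc ((m:ℝ)⁻¹) ^ 2 * ‖∑ j ∈ s, (W k - W j)‖ ^ 2
        ≤ ((m:ℝ)⁻¹) ^ 2 * ((m:ℝ) * ∑ j ∈ s, ‖W k - W j‖ ^ 2) := by
          apply mul_le_mul_of_nonneg_left h3 (by positivity)
      _ = (m:ℝ)⁻¹ * ∑ j ∈ s, ‖W k - W j‖ ^ 2 := by
          field_simp
  -- Step 2
  have step2 : ∑ j ∈ s, ‖W k - W j‖ ^ 2 ≤ krumScore W N k := by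
    apply Finset.sum_le_sum_of_subset_of_nonneg (Finset.sdiff_subset)
    intro j _ _; positivity
  -- Step 3: split score of i
  have step3 : krumScore W N i ≤ (∑ j ∈ N i \ B, ‖W i - W j‖ ^ 2) + ((N i ∩ B).card : ℝ) * ‖W i - W ζ‖ ^ 2 := by
    have hsplit : krumScore W N i = (∑ j ∈ N i \ B, ‖W i - W j‖ ^ 2) + ∑ j ∈ N i ∩ B, ‖W i - W j‖ ^ 2 := by
      rw [krumScore, ← Finset.sum_inter_add_sum_sdiff (N i) B (fun j => ‖W i - W j‖ ^ 2)]
      ring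
    rw [hsplit]
    gcongr
    calc ∑ j ∈ N i ∩ B, ‖W i - W j‖ ^ 2
        ≤ ∑ _j ∈ N i ∩ B, ‖W i - W ζ‖ ^ 2 := by
          apply Finset.sum_le_sum
          intro j hj
          exact pow_le_pow_left₀ (norm_nonneg _) (hζfar j (Finset.mem_inter.1 hj).1) 2
      _ = ((N i ∩ B).card : ℝ) * ‖W i - W ζ‖ ^ 2 := by
          rw [Finset.sum_const, nsmul_eq_mul]
  calc ‖W k - (m:ℝ)⁻¹ • ∑ j ∈ s, W j‖ ^ 2 ≤ (m:ℝ)⁻¹ * ∑ j ∈ s, ‖W k - W j‖ ^ 2 := step1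
    _ ≤ (m:ℝ)⁻¹ * ((∑ j ∈ N i \ B, ‖W i - W j‖ ^ 2) + ((N i ∩ B).card : ℝ) * ‖W i - W ζ‖ ^ 2) := by
        apply mul_le_mul_of_nonneg_left (le_trans step2 (le_trans hscore step3)) (by positivity)
end

section
/- Fix integers n, f, d with 2f + 2 < n and d ≥ 1. There exists a constant C > 0, depending only on n and f, such that the following holds. Let W_1, …, W_n be vectors in ℝ^d and let B ⊆ {1,…,n} be a set of Byzantine indices with |B| ≤ f; for each index i let N(i) be a set of n − f − 2 indices j ≠ i minimizing ‖W_i − W_j‖ and let s(i) = Σ_{j∈N(i)} ‖W_i − W_j‖². If k ∈ B satisfies s(k) ≤ s(i) for every correct index i ∉ B, then ‖W_k‖ ≤ C · Σ_{j∉B} ‖W_j‖. -/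
/-!
A correct index `i` has at most `n - f - 1` indices in `{i} ∪ N i`, so some correct `l` lies
outside its neighbourhood; by the nearest-neighbour property every neighbour of `i` is then
within `‖W i - W l‖ ≤ S := ∑_{j ∉ B} ‖W j‖`, and the score of `i` is at most `(n - f - 2) S²`.
Since `N k` has `n - f - 2 > f` elements it contains a correct `j`, and the score inequality
gives `‖W k - W j‖² ≤ (n - f - 2) S²`; the triangle inequality through `W j` then bounds `‖W k‖`
by `n S`.
-/

open Finset

theorem norm_sub_le_sum_norm_of_ne {ι E : Type*} [SeminormedAddCommGroup E] (W : ι → E)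
    {s : Finset ι} {i l : ι} (hi : i ∈ s) (hl : l ∈ s) (hil : i ≠ l) :
    ‖W i - W l‖ ≤ ∑ j ∈ s, ‖W j‖ := by
  classical
  calc ‖W i - W l‖ ≤ ‖W i‖ + ‖W l‖ := norm_sub_le _ _
    _ = ∑ j ∈ {i, l}, ‖W j‖ := (sum_pair (f := fun j => ‖W j‖) hil).symm
    _ ≤ ∑ j ∈ s, ‖W j‖ :=
      sum_le_sum_of_subset_of_nonneg (insert_subset hi (singleton_subset_iff.mpr hl))
        fun j _ _ => norm_nonneg _

section krumScore

variable {d n : ℕ} (W : Fin n → EuclideanSpace ℝ (Fin d)) (N : Fin n → Finset (Fin n))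

theorem norm_sub_sq_le_krumScore {i j : Fin n} (hj : j ∈ N i) :
    ‖W i - W j‖ ^ 2 ≤ krumScore W N i :=
  single_le_sum (f := fun j => ‖W i - W j‖ ^ 2) (fun _ _ => sq_nonneg _) hj

theorem krumScore_le_card_mul_sq {i : Fin n} {r : ℝ} (hr : ∀ j ∈ N i, ‖W i - W j‖ ≤ r) :
    krumScore W N i ≤ #(N i) * r ^ 2 := by
  rw [← nsmul_eq_mul, ← sum_const]
  exact sum_le_sum fun j hj => pow_le_pow_left₀ (norm_nonneg _) (hr j hj) 2

theorem krumScore_le_card_mul_sq_sum_norm {C : Finset (Fin n)} {i : Fin n}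
    (hnear : ∀ j ∈ N i, ∀ l, l ∉ N i → l ≠ i → ‖W i - W j‖ ≤ ‖W i - W l‖)
    (hi : i ∈ C) (hcard : #(N i) + 1 < #C) :
    krumScore W N i ≤ #(N i) * (∑ j ∈ C, ‖W j‖) ^ 2 := by
  obtain ⟨l, hlC, hl⟩ : ∃ l ∈ C, l ∉ insert i (N i) :=
    exists_mem_notMem_of_card_lt_card ((card_insert_le i (N i)).trans_lt hcard)
  rw [mem_insert, not_or] at hl
  refine krumScore_le_card_mul_sq W N fun j hj => ?_
  exact (hnear j hj l hl.2 hl.1).trans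
    (norm_sub_le_sum_norm_of_ne W hi hlC fun h => hl.1 h.symm)

theorem norm_le_sum_norm_add_of_krumScore_le_sq {C : Finset (Fin n)} {k j : Fin n} {r : ℝ}
    (hjN : j ∈ N k) (hjC : j ∈ C) (hr : 0 ≤ r) (hk : krumScore W N k ≤ r ^ 2) :
    ‖W k‖ ≤ ∑ j ∈ C, ‖W j‖ + r := by
  have hdist : ‖W k - W j‖ ≤ r :=
    (sq_le_sq₀ (norm_nonneg _) hr).mp ((norm_sub_sq_le_krumScore W N hjN).trans hk)
  calc ‖W k‖ ≤ ‖W j‖ + ‖W k - W j‖ := norm_le_norm_add_norm_sub' _ _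
    _ ≤ ∑ j ∈ C, ‖W j‖ + r := add_le_add (single_le_sum (fun _ _ => norm_nonneg _) hjC) hdist

end krumScore

/-- there is a constant `C > 0` depending only on `n` and `f` such that any
Byzantine vector `W k` whose multi-Krum score is at most the score of every correct index
has norm bounded by `C` times the sum of the norms of the correct vectors. -/
theorem byzantine_norm_bounded (n f : ℕ) (hnf : 2 * f + 2 < n) :
    ∃ C : ℝ, 0 < C ∧
      ∀ (d : ℕ), 1 ≤ d →
      ∀ (W : Fin n → EuclideanSpace ℝ (Fin d))
        (B : Finset (Fin n)), B.card ≤ f →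
      ∀ (N : Fin n → Finset (Fin n)),
        (∀ i, (N i).card = n - f - 2) →
        (∀ i, i ∉ N i) →
        (∀ i, ∀ j ∈ N i, ∀ l, l ∉ N i → l ≠ i → ‖W i - W j‖ ≤ ‖W i - W l‖) →
      ∀ k ∈ B, (∀ i ∉ B, krumScore W N k ≤ krumScore W N i) →
        ‖W k‖ ≤ C * ∑ j ∈ Bᶜ, ‖W j‖ := by
  refine ⟨n, by exact_mod_cast (by omega : 0 < n), ?_⟩
  intro d _ W B hB N hcard _ hnear k _ hscore
  set m := n - f - 2
  set S := ∑ j ∈ Bᶜ, ‖W j‖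
  have hcompl : n - f ≤ #Bᶜ := by rw [card_compl, Fintype.card_fin]; omega
  obtain ⟨i, hi⟩ : Bᶜ.Nonempty := card_pos.mp (by omega)
  have hscore_i : krumScore W N i ≤ m * S ^ 2 := by
    simpa only [hcard] using
      krumScore_le_card_mul_sq_sum_norm W N (hnear i) hi (by rw [hcard]; omega)
  have hscore_k : krumScore W N k ≤ (m * S) ^ 2 := by
    have hm : (m : ℝ) ≤ (m : ℝ) ^ 2 := by exact_mod_cast Nat.le_self_pow two_ne_zero m
    calc krumScore W N k ≤ krumScore W N i := hscore i (mem_compl.mp hi)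
      _ ≤ m * S ^ 2 := hscore_i
      _ ≤ (m * S) ^ 2 := by rw [mul_pow]; gcongr
  obtain ⟨j, hjN, hjB⟩ : ∃ j ∈ N k, j ∉ B :=
    exists_mem_notMem_of_card_lt_card (by rw [hcard]; omega)
  calc ‖W k‖ ≤ S + m * S :=
        norm_le_sum_norm_add_of_krumScore_le_sq W N hjN (mem_compl.mpr hjB) (by positivity)
          hscore_k
    _ ≤ n * S := by
      rw [← one_add_mul]
      gcongr
      exact_mod_cast (by omega : 1 + m ≤ n)
end
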